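/- arXiv:1510.04072 — 15 statements merged into one kernel-verified Lean document; each statement's English description precedes it below -/
import Mathlib

section
/- Let S be a good semigroup and let E and F be semigroup ideals of S. Then E − F is a semigroup ideal of S. If moreover E satisfies (E1), then E − F satisfies (E1), and the conductor ideal C_E is a good semigroup ideal of S and also a good semigroup ideal of ℕ^I (i.e., C_E + ℕ^I ⊆ C_E and C_E satisfies (E1) and (E2)). -/
namespace GoodSemigroup

variable {I : Type*}

/-- Property (E1): closedness under componentwise minimum. -/
def SatE1 (E : Set (I → ℤ)) : Prop := ∀ a ∈ E, ∀ b ∈ E, a ⊓ b ∈ E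

/-- Property (E2). -/
def SatE2 (E : Set (I → ℤ)) : Prop :=
  ∀ a ∈ E, ∀ b ∈ E, ∀ j : I, a j = b j →
    ∃ ε ∈ E, a j < ε j ∧ (∀ i : I, i ≠ j → min (a i) (b i) ≤ ε i) ∧
      ∀ i : I, i ≠ j → a i ≠ b i → ε i = min (a i) (b i)

/-- A good semigroup `S ⊆ ℤ^I`. -/
def IsGood (S : Set (I → ℤ)) : Prop :=
  (0 : I → ℤ) ∈ S ∧ (∀ a ∈ S, ∀ b ∈ S, a + b ∈ S) ∧ (∀ a ∈ S, 0 ≤ a) ∧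
  (∃ α : I → ℤ, ∀ β : I → ℤ, 0 ≤ β → α + β ∈ S) ∧ SatE1 S ∧ SatE2 S

/-- A semigroup ideal of `S`. -/
def IsIdeal (S E : Set (I → ℤ)) : Prop :=
  E.Nonempty ∧ (∀ a ∈ E, ∀ s ∈ S, a + s ∈ E) ∧ ∃ α ∈ S, ∀ a ∈ E, α + a ∈ S

/-- A good semigroup ideal of `S`. -/
def IsGoodIdeal (S E : Set (I → ℤ)) : Prop := IsIdeal S E ∧ SatE1 E ∧ SatE2 E

/-- The difference `E − F = {α | α + F ⊆ E}`. -/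
def sub (E F : Set (I → ℤ)) : Set (I → ℤ) := {α | ∀ f ∈ F, α + f ∈ E}

/-- The conductor ideal `C_E = E − ℕ^I`. -/
def cond (E : Set (I → ℤ)) : Set (I → ℤ) := sub E {β : I → ℤ | 0 ≤ β}

/-- `Δ_J(α)`. -/
def deltaJ (J : Set I) (α : I → ℤ) : Set (I → ℤ) :=
  {β | (∀ j ∈ J, β j = α j) ∧ ∀ i ∉ J, α i < β i}

/-- `Δ(α) = ⋃_i Δ_{i}(α)`. -/
def delta (α : I → ℤ) : Set (I → ℤ) := ⋃ i : I, deltaJ {i} α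

/-- The normalized canonical ideal `K⁰_S = {α | Δ^S(τ − α) = ∅}` (with `τ` a parameter). -/
def K0 (S : Set (I → ℤ)) (τ : I → ℤ) : Set (I → ℤ) := {α | delta (τ - α) ∩ S = ∅}

/-- `a` and `b` are consecutive elements of `E`. -/
def Consecutive (E : Set (I → ℤ)) (a b : I → ℤ) : Prop :=
  a ∈ E ∧ b ∈ E ∧ a < b ∧ ∀ c ∈ E, ¬(a < c ∧ c < b)

/-- A saturated chain in `E` of length `n` from `a` to `b`. -/
def SaturatedChain (E : Set (I → ℤ)) (n : ℕ) (c : Fin (n + 1) → I → ℤ)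
    (a b : I → ℤ) : Prop :=
  c 0 = a ∧ c (Fin.last n) = b ∧ ∀ i : Fin n, Consecutive E (c i.castSucc) (c i.succ)

/-- Property (E4): any two saturated chains with the same endpoints have the same length. -/
def SatE4 (E : Set (I → ℤ)) : Prop :=
  ∀ a ∈ E, ∀ b ∈ E, ∀ n m : ℕ, ∀ c c',
    SaturatedChain E n c a b → SaturatedChain E m c' a b → n = m

/-- `K ∈ 𝔊_S` is a canonical ideal of `S` if `K ⊆ E` and `γ^K = γ^E` imply `K = E`
for all `E ∈ 𝔊_S`. -/
def IsCanonicalIdeal (S K : Set (I → ℤ)) : Prop :=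
  IsGoodIdeal S K ∧ ∀ E γ, IsGoodIdeal S E → K ⊆ E →
    IsLeast (cond K) γ → IsLeast (cond E) γ → K = E

end GoodSemigroup

open GoodSemigroup

lemma my_sub_ideal {I : Type*} (S E F : Set (I → ℤ)) (hS : IsGood S)
    (hE : IsIdeal S E) (hF : IsIdeal S F) : IsIdeal S (sub E F) := by
  obtain ⟨⟨e, he⟩, hEabs, γE, hγES, hγE⟩ := hE
  obtain ⟨⟨f, hf⟩, hFabs, γF, hγFS, hγF⟩ := hF
  refine ⟨⟨e + γF, ?_⟩, ?_, ?_⟩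
  · intro g hg
    have h1 : γF + g ∈ S := hγF g hg
    have h2 := hEabs e he _ h1
    have h3 : e + (γF + g) = e + γF + g := by ring
    rwa [h3] at h2
  · intro a ha s hs g hg
    have h1 := hEabs _ (ha g hg) s hs
    have h2 : a + g + s = a + s + g := by ring
    rwa [h2] at h1
  · refine ⟨γE + (γF + f), hS.2.1 _ hγES _ (hγF f hf), ?_⟩
    intro a ha
    have h1 : a + f ∈ E := ha f hf
    have h2 : γE + (a + f) ∈ S := hγE _ h1
    have h3 := hS.2.1 _ h2 _ hγFS
    have h4 : γE + (a + f) + γF = γE + (γF + f) + a := by ring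
    rwa [h4] at h3

lemma my_sub_satE1 {I : Type*} (E F : Set (I → ℤ)) (hE1 : SatE1 E) :
    SatE1 (sub E F) := by
  intro a ha b hb f hf
  have key : a ⊓ b + f = (a + f) ⊓ (b + f) := by
    funext i
    simp [Pi.inf_apply, min_add_add_right]
  rw [key]
  exact hE1 _ (ha f hf) _ (hb f hf)

lemma my_cond_up {I : Type*} (E : Set (I → ℤ)) {a b : I → ℤ}
    (ha : a ∈ cond E) (hab : a ≤ b) : b ∈ cond E := by
  intro g hg
  have h1 : (0 : I → ℤ) ≤ b - a + g := by
    intro i; have := hab i; have := hg i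
    simp only [Pi.sub_apply, Pi.add_apply, Pi.zero_apply] at *; omega
  have h2 := ha _ h1
  have h3 : a + (b - a + g) = b + g := by ring
  rwa [h3] at h2

/-- Lemma 3.4 (Lem. 29): `E − F` is a semigroup ideal of `S`; if `E` satisfies (E1),
then so does `E − F`, and the conductor ideal `C_E` is a good semigroup ideal of `S`
and also a good semigroup ideal of `ℕ^I`. -/
theorem sub_isIdeal_and_cond_good {I : Type*} [Fintype I] [Nonempty I]
    (S E F : Set (I → ℤ)) (hS : IsGood S) (hE : IsIdeal S E) (hF : IsIdeal S F) :
    IsIdeal S (sub E F) ∧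
    (SatE1 E →
      SatE1 (sub E F) ∧
      IsGoodIdeal S (cond E) ∧
      (∀ c ∈ cond E, ∀ n : I → ℤ, 0 ≤ n → c + n ∈ cond E) ∧
      SatE1 (cond E) ∧ SatE2 (cond E)) := by
  classical
  have hN : IsIdeal S {β : I → ℤ | 0 ≤ β} := by
    obtain ⟨α, hα⟩ := hS.2.2.2.1
    have hαS : α ∈ S := by simpa using hα 0 le_rfl
    refine ⟨⟨0, fun i => le_rfl⟩, ?_, α, hαS, fun a ha => hα a ha⟩
    intro a ha s hs
    exact add_nonneg ha (hS.2.2.1 s hs)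
  have hcond : IsIdeal S (cond E) := my_sub_ideal S E _ hS hE hN
  refine ⟨my_sub_ideal S E F hS hE hF, fun hE1 => ?_⟩
  have hup : ∀ c ∈ cond E, ∀ n : I → ℤ, 0 ≤ n → c + n ∈ cond E := by
    intro c hc n hn
    exact my_cond_up E hc (le_add_of_nonneg_right hn)
  have hc1 : SatE1 (cond E) := my_sub_satE1 E _ hE1
  have hc2 : SatE2 (cond E) := by
    intro a ha b hb j hj
    refine ⟨a ⊓ b + Pi.single j 1, ?_, ?_, ?_, ?_⟩
    · exact hup _ (hc1 a ha b hb) _ (fun i => by by_cases h : i = j <;> simp [Pi.single_apply, h])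
    · simp [Pi.inf_apply, hj]
    · intro i hi
      simp [Pi.inf_apply, Pi.single_apply, hi]
    · intro i hi _
      simp [Pi.inf_apply, Pi.single_apply, hi]
  exact ⟨my_sub_satE1 E F hE1, ⟨hcond, hc1, hc2⟩, hup, hc1, hc2⟩
end

section
/- Let S be a good semigroup, E ∈ 𝔊_S, α ∈ E and J ⊆ I with α_j ≥ γ^E_j for all j ∈ J. If δ ∈ ℤ^I satisfies δ_j ≥ γ^E_j for all j ∈ J and δ_k = α_k for all k ∈ I ∖ J, then δ ∈ E. -/
open GoodSemigroup
/-- Lemma 31. -/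
theorem mem_of_ge_conductor_on_subset {I : Type*} [Fintype I] [Nonempty I]
    (S E : Set (I → ℤ)) (hS : IsGood S) (hE : IsGoodIdeal S E)
    (γE : I → ℤ) (hγE : IsLeast (cond E) γE)
    (α : I → ℤ) (hα : α ∈ E) (J : Set I) (hαJ : ∀ j ∈ J, γE j ≤ α j)
    (δ : I → ℤ) (hδJ : ∀ j ∈ J, γE j ≤ δ j) (hδk : ∀ k ∉ J, δ k = α k) :
    δ ∈ E := by
  classical
  -- Anything ≥ γE lies in E.
  have hmem : ∀ x : I → ℤ, γE ≤ x → x ∈ E := by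
    intro x hx
    have h := hγE.1 (x - γE) (by intro i; simpa using hx i)
    have hx' : γE + (x - γE) = x := by ring
    rwa [hx'] at h
  -- Key claim: we can raise the J-coordinates of α above δ while keeping the rest.
  have key : ∀ N : ℕ, ∀ β : I → ℤ, β ∈ E → (∀ k ∉ J, β k = α k) →
      (∀ j ∈ J, γE j ≤ β j) →
      (∑ j : I, if j ∈ J then (δ j - β j).toNat else 0) ≤ N →
      ∃ β' ∈ E, (∀ k ∉ J, β' k = α k) ∧ ∀ j ∈ J, δ j ≤ β' j := by
    intro N
    induction N with
    | zero =>
      intro β hβ hoff hγ hsum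
      refine ⟨β, hβ, hoff, ?_⟩
      intro j hj
      have h0 := Finset.sum_eq_zero_iff.mp (Nat.le_zero.mp hsum) j (Finset.mem_univ j)
      rw [if_pos hj] at h0
      omega
    | succ n ih =>
      intro β hβ hoff hγ hsum
      by_cases hall : ∀ j ∈ J, δ j ≤ β j
      · exact ⟨β, hβ, hoff, hall⟩
      · push_neg at hall
        obtain ⟨j0, hj0, hlt⟩ := hall
        set θ : I → ℤ := fun i => if i = j0 then β j0 else max (γE i) (β i + 1) with hθdef
        have hθE : θ ∈ E := by
          apply hmem
          intro i
          by_cases hij : i = j0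
          · subst hij; simp [hθdef, hγ i hj0]
          · simp [hθdef, hij]
        have hθgt : ∀ i, i ≠ j0 → β i < θ i := by
          intro i hij
          simp only [hθdef, if_neg hij]
          omega
        have hθj0 : β j0 = θ j0 := by simp [hθdef]
        obtain ⟨ε, hεE, hεj0, _, hforce⟩ := hE.2.2 β hβ θ hθE j0 hθj0
        have hεeq : ∀ i, i ≠ j0 → ε i = β i := by
          intro i hij
          have hne : β i ≠ θ i := ne_of_lt (hθgt i hij)
          have := hforce i hij hne
          rw [this, min_eq_left (le_of_lt (hθgt i hij))]
        apply ih ε hεE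
        · intro k hk
          have hkj0 : k ≠ j0 := fun h => hk (h ▸ hj0)
          rw [hεeq k hkj0]; exact hoff k hk
        · intro j hj
          by_cases hjj : j = j0
          · subst hjj; exact le_of_lt (lt_of_le_of_lt (hγ j hj) hεj0)
          · rw [hεeq j hjj]; exact hγ j hj
        · have hstep : (∑ j : I, if j ∈ J then (δ j - ε j).toNat else 0) <
              ∑ j : I, if j ∈ J then (δ j - β j).toNat else 0 := by
            apply Finset.sum_lt_sum
            · intro i _
              by_cases hi : i ∈ J
              · simp only [if_pos hi]
                by_cases hij : i = j0
                · subst hij; omega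
                · rw [hεeq i hij]
              · simp [hi]
            · refine ⟨j0, Finset.mem_univ j0, ?_⟩
              simp only [if_pos hj0]
              omega
          omega
  obtain ⟨β', hβ'E, hβ'off, hβ'J⟩ :=
    key (∑ j : I, if j ∈ J then (δ j - α j).toNat else 0) α hα
      (fun _ _ => rfl) hαJ le_rfl
  set θ' : I → ℤ := fun i => if i ∈ J then δ i else max (γE i) (β' i + 1) with hθ'def
  have hθ'E : θ' ∈ E := by
    apply hmem
    intro i
    by_cases hi : i ∈ J
    · simp [hθ'def, hi, hδJ i hi]
    · simp [hθ'def, hi]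
  have hinf := hE.2.1 β' hβ'E θ' hθ'E
  have hδeq : δ = β' ⊓ θ' := by
    funext i
    simp only [Pi.inf_apply]
    by_cases hi : i ∈ J
    · simp only [hθ'def, if_pos hi]
      exact (min_eq_right (hβ'J i hi)).symm
    · simp only [hθ'def, if_neg hi]
      have h1 : β' i < max (γE i) (β' i + 1) := by omega
      rw [min_eq_left (le_of_lt h1), hβ'off i hi, hδk i hi]
  rwa [hδeq]
end

section
/- Let S be a good semigroup. Then Δ^E(τ^E) = ∅ for every good semigroup ideal E ∈ 𝔊_S. -/
open GoodSemigroup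
open Finset


lemma climb {I : Type*} [Fintype I] [DecidableEq I] (E : Set (I → ℤ))
    (h1 : SatE1 E) (h2 : SatE2 E)
    (γ : I → ℤ) (hγ : ∀ y : I → ℤ, γ ≤ y → y ∈ E) (i : I) (α : I → ℤ)
    (hα : ∀ j, j ≠ i → γ j ≤ α j) :
    ∀ n : ℕ, ∀ m : I → ℤ, m ∈ E → m ≤ α → m i = α i → (∀ j, j ≠ i → γ j ≤ m j) →
      (∑ j, (α j - m j)).toNat ≤ n → α ∈ E := by
  intro n
  induction n with
  | zero =>
    intro m hm hle hi hγm hsum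
    rw [Pi.le_def] at hle
    have heq : ∀ j, α j = m j := by
      intro j
      by_contra h
      have h1j : 1 ≤ α j - m j := by have := hle j; omega
      have hnn : ∀ k ∈ univ, (0:ℤ) ≤ α k - m k := fun k _ => by have := hle k; omega
      have hs := Finset.single_le_sum hnn (mem_univ j)
      omega
    have : α = m := funext heq
    rwa [this]
  | succ n ih =>
    intro m hm hle hi hγm hsum
    rw [Pi.le_def] at hle
    by_cases hfin : ∀ j, α j = m j
    · have : α = m := funext hfin
      rwa [this]
    · push_neg at hfin
      obtain ⟨j, hj⟩ := hfin
      have hjlt : m j < α j := lt_of_le_of_ne (hle j) (Ne.symm hj)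
      have hji : j ≠ i := by intro h; rw [h] at hjlt; omega
      obtain ⟨c, hc⟩ : ∃ c : I → ℤ, c = fun k => if k = j then m j else max (max (m k) (α k)) (γ k) + 1 := ⟨_, rfl⟩
      have hcE : c ∈ E := by
        apply hγ
        intro k
        by_cases hk : k = j
        · simp only [hc, hk, if_pos rfl]; exact hγm j hji
        · simp only [hc, if_neg hk]
          have : γ k ≤ max (max (m k) (α k)) (γ k) := le_max_right _ _
          omega
      have hcj : m j = c j := by simp [hc]
      obtain ⟨ε, hεE, hεj, _, hfix⟩ := h2 m hm c hcE j hcj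
      have hck : ∀ k, k ≠ j → m k < c k := by
        intro k hk
        simp only [hc, if_neg hk]
        have ha1 := le_max_left (m k) (α k)
        have ha2 := le_max_left (max (m k) (α k)) (γ k)
        omega
      have hεk : ∀ k, k ≠ j → ε k = m k := by
        intro k hk
        have h' := hck k hk
        have := hfix k hk (by omega)
        omega
      obtain ⟨c', hc'⟩ : ∃ c' : I → ℤ, c' = fun k => if k = j then α j else max (max (ε k) (α k)) (γ k) + 1 := ⟨_, rfl⟩
      have hc'E : c' ∈ E := by
        apply hγ
        intro k
        by_cases hk : k = j
        · simp only [hc', hk, if_pos rfl]; exact hα j hji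
        · simp only [hc', if_neg hk]
          have : γ k ≤ max (max (ε k) (α k)) (γ k) := le_max_right _ _
          omega
      obtain ⟨m', hm'def⟩ : ∃ m' : I → ℤ, m' = ε ⊓ c' := ⟨_, rfl⟩
      have hm'E : m' ∈ E := hm'def ▸ h1 ε hεE c' hc'E
      have hm'k : ∀ k, k ≠ j → m' k = m k := by
        intro k hk
        have h1' := hεk k hk
        have h2' : ε k < c' k := by
          simp only [hc', if_neg hk]
          have ha1 := le_max_left (ε k) (α k)
          have ha2 := le_max_left (max (ε k) (α k)) (γ k)
          omega
        simp only [hm'def, Pi.inf_apply]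
        omega
      have hm'j : m' j = min (ε j) (α j) := by
        simp only [hm'def, Pi.inf_apply, hc', if_pos rfl]
        rfl
      have hm'jlt : m j + 1 ≤ m' j ∧ m' j ≤ α j := by
        rw [hm'j]
        exact ⟨le_min (by omega) (by omega), min_le_right _ _⟩
      have hle' : m' ≤ α := by
        intro k
        by_cases hk : k = j
        · subst hk; exact hm'jlt.2
        · rw [hm'k k hk]; exact hle k
      have hi' : m' i = α i := by rw [hm'k i (Ne.symm hji)]; exact hi
      have hγm' : ∀ k, k ≠ i → γ k ≤ m' k := by
        intro k hk
        by_cases hkj : k = j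
        · subst hkj; have := hγm k hk; omega
        · rw [hm'k k hkj]; exact hγm k hk
      -- the sum decreases
      have hsumeq : ∑ k, (α k - m' k) = (∑ k, (α k - m k)) - (m' j - m j) := by
        have hone : ∑ k, (m' k - m k) = m' j - m j := by
          refine Finset.sum_eq_single_of_mem j (mem_univ j) ?_
          intro k _ hk
          rw [hm'k k hk]; ring
        calc ∑ k, (α k - m' k) = ∑ k, ((α k - m k) - (m' k - m k)) := by
              apply Finset.sum_congr rfl; intro k _; ring
          _ = (∑ k, (α k - m k)) - ∑ k, (m' k - m k) := Finset.sum_sub_distrib _ _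
          _ = (∑ k, (α k - m k)) - (m' j - m j) := by rw [hone]
      have hnn' : (0:ℤ) ≤ ∑ k, (α k - m' k) :=
        Finset.sum_nonneg fun k _ => by have := Pi.le_def.mp hle' k; omega
      exact ih m' hm'E hle' hi' hγm' (by clear hm'j hm'def hcj hc hc'; omega)

theorem delta_tau_empty' {I : Type*} [Fintype I] [DecidableEq I]
    (E : Set (I → ℤ)) (h1 : SatE1 E) (h2 : SatE2 E)
    (γE : I → ℤ) (hmem : ∀ y : I → ℤ, γE ≤ y → y ∈ E)
    (hlb : ∀ g : I → ℤ, (∀ y : I → ℤ, g ≤ y → y ∈ E) → γE ≤ g)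
    (i : I) (β : I → ℤ) (hβE : β ∈ E) (hβi : β i = γE i - 1)
    (hβk : ∀ k, k ≠ i → γE k ≤ β k) : False := by
  obtain ⟨γ', hγ'⟩ : ∃ γ' : I → ℤ, γ' = fun k => if k = i then γE i - 1 else γE k := ⟨_, rfl⟩
  have hcond : ∀ y : I → ℤ, γ' ≤ y → y ∈ E := by
    intro y hy
    rw [Pi.le_def] at hy
    by_cases hyi : γE i ≤ y i
    · apply hmem
      intro k
      by_cases hk : k = i
      · subst hk; exact hyi
      · have := hy k; simp only [hγ', if_neg hk] at this; exact this
    · have hyi' : y i = γE i - 1 := by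
        have := hy i; simp only [hγ', if_pos rfl] at this; omega
      have hyk : ∀ k, k ≠ i → γE k ≤ y k := by
        intro k hk
        have := hy k; simp only [hγ', if_neg hk] at this; exact this
      -- b : like y but with i-th coordinate γE i, so b ≥ γE
      obtain ⟨b, hb⟩ : ∃ b : I → ℤ, b = fun k => if k = i then γE i else y k := ⟨_, rfl⟩
      have hbE : b ∈ E := by
        apply hmem
        intro k
        by_cases hk : k = i
        · simp [hb, hk]
        · simp only [hb, if_neg hk]; exact hyk k hk
      obtain ⟨m, hm⟩ : ∃ m : I → ℤ, m = β ⊓ b := ⟨_, rfl⟩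
      have hmE : m ∈ E := hm ▸ h1 β hβE b hbE
      have hmi : m i = y i := by
        simp only [hm, Pi.inf_apply, hb, if_true, eq_self_iff_true]
        rw [inf_eq_left.mpr (by omega : β i ≤ γE i)]; omega
      have hmle : m ≤ y := by
        intro k
        by_cases hk : k = i
        · subst hk; exact hmi.le
        · simp only [hm, Pi.inf_apply, hb, if_neg hk]
          exact inf_le_right
      have hγm : ∀ k, k ≠ i → γE k ≤ m k := by
        intro k hk
        simp only [hm, Pi.inf_apply, hb, if_neg hk]
        exact le_inf (hβk k hk) (hyk k hk)
      exact climb E h1 h2 γE hmem i y hyk _ m hmE hmle hmi hγm le_rfl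
  have := Pi.le_def.mp (hlb γ' hcond) i
  simp only [hγ', if_pos rfl] at this
  omega

/-- Lemma 32: `Δ^E(τ^E) = ∅` for any good semigroup ideal `E`. -/
theorem delta_tau_empty {I : Type*} [Fintype I] [Nonempty I]
    (S E : Set (I → ℤ)) (hS : IsGood S) (hE : IsGoodIdeal S E)
    (γE : I → ℤ) (hγE : IsLeast (cond E) γE) :
    delta (γE - 1) ∩ E = ∅ := by
  classical
  rw [Set.eq_empty_iff_forall_notMem]
  rintro β ⟨hβd, hβE⟩
  obtain ⟨_, ⟨i, rfl⟩, hβi'⟩ := hβd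
  obtain ⟨hβi, hβgt⟩ := hβi'
  have hmem : ∀ y : I → ℤ, γE ≤ y → y ∈ E := by
    intro y hy
    have := hγE.1 (y - γE) (by intro k; have := Pi.le_def.mp hy k; simp; omega)
    simpa using this
  have hlb : ∀ g : I → ℤ, (∀ y : I → ℤ, g ≤ y → y ∈ E) → γE ≤ g := by
    intro g hg
    exact hγE.2 (fun f hf => hg _ (by
      intro k
      have h0 : (0:ℤ) ≤ f k := by
        have : (0:I → ℤ) ≤ f := hf
        simpa using Pi.le_def.mp this k
      simp; omega))
  refine delta_tau_empty' E hE.2.1 hE.2.2 γE hmem hlb i β hβE ?_ ?_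
  · have := hβi i rfl
    simpa [sub_eq_add_neg] using this
  · intro k hk
    have := hβgt k (by simpa using hk)
    simp only [Pi.sub_apply, Pi.one_apply] at this
    omega
end

section
/- Let E and F be semigroup ideals of a good semigroup S, both satisfying property (E1). Then γ^{E−F} = γ^E − μ^F. -/
open GoodSemigroup
/-- Lemma 33: `γ^{E−F} = γ^E − μ^F`. -/
theorem conductor_sub {I : Type*} [Fintype I] [Nonempty I]
    (S E F : Set (I → ℤ)) (hS : IsGood S) (hE : IsIdeal S E) (hF : IsIdeal S F)
    (hE1 : SatE1 E) (hF1 : SatE1 F)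
    (γE μF : I → ℤ) (hγE : IsLeast (cond E) γE) (hμF : IsLeast F μF) :
    IsLeast (cond (sub E F)) (γE - μF) := by
  obtain ⟨hγmem, hγlb⟩ := hγE
  obtain ⟨hμmem, hμlb⟩ := hμF
  constructor
  · intro β hβ f hf
    have hge : (0 : I → ℤ) ≤ β + f - μF := by
      have := hμlb hf
      intro i
      have h1 := hβ i
      have h2 := this i
      simp only [Pi.zero_apply, Pi.sub_apply, Pi.add_apply] at *
      linarith
    have h : γE + (β + f - μF) ∈ E := hγmem _ hge
    have : γE - μF + β + f = γE + (β + f - μF) := by ring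
    rwa [this]
  · intro α hα
    have hmem : α + μF ∈ cond E := by
      intro β hβ
      have h := hα β hβ μF hμmem
      have : α + μF + β = α + β + μF := by ring
      rwa [this]
    have h := hγlb hmem
    intro i
    have := h i
    simp only [Pi.add_apply, Pi.sub_apply] at *
    linarith
end

section
/- Let E ⊆ F be two semigroup ideals of a good semigroup S, where E ∈ 𝔊_S and F satisfies property (E1). Let α ∈ F ∖ E be minimal (in the componentwise order among elements of F ∖ E). Then any β ∈ E that is maximal among elements of E with β < α, together with any β' ∈ E that is minimal among elements of E with α < β', are consecutive in E. -/
open GoodSemigroup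
/-- Lemma 34. -/
theorem consecutive_around_minimal {I : Type*} [Fintype I] [Nonempty I]
    (S E F : Set (I → ℤ)) (hS : IsGood S)
    (hE : IsGoodIdeal S E) (hF : IsIdeal S F) (hF1 : SatE1 F) (hEF : E ⊆ F)
    (α : I → ℤ) (hα : α ∈ F \ E) (hαmin : ∀ x ∈ F \ E, ¬x < α)
    (β : I → ℤ) (hβ : β ∈ E) (hβα : β < α) (hβmax : ∀ x ∈ E, x < α → ¬β < x)
    (β' : I → ℤ) (hβ' : β' ∈ E) (hαβ' : α < β') (hβ'min : ∀ x ∈ E, α < x → ¬x < β') :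
    Consecutive E β β' := by
  obtain ⟨hαF, hαE⟩ := hα
  refine ⟨hβ, hβ', hβα.trans hαβ', ?_⟩
  rintro δ hδ ⟨hβδ, hδβ'⟩
  -- Step 1: δ ⊓ α = β
  have hm0F : δ ⊓ α ∈ F := hF1 δ (hEF hδ) α hαF
  have hm0le : δ ⊓ α ≤ α := inf_le_right
  have hβm0 : β ≤ δ ⊓ α := le_inf hβδ.le hβα.le
  have hm0 : δ ⊓ α = β := by
    rcases eq_or_lt_of_le hm0le with h | h
    · have hαδ : α ≤ δ := h ▸ (inf_le_left : δ ⊓ α ≤ δ)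
      have : α < δ := lt_of_le_of_ne hαδ (fun he => hαE (he ▸ hδ))
      exact absurd hδβ' (hβ'min δ hδ this)
    · by_cases hmE : δ ⊓ α ∈ E
      · exact (hβm0.lt_or_eq.resolve_left (hβmax _ hmE h)).symm
      · exact absurd h (hαmin _ ⟨hm0F, hmE⟩)
  -- Step 2: find j with δ j = β j < α j
  obtain ⟨-, j, hj⟩ := Pi.lt_def.mp hβα
  have hδj : δ j = β j := by
    have h1 := congrFun hm0 j
    have h2 := hβδ.le j
    simp only [Pi.inf_apply] at h1
    omega
  -- Step 3: apply E2 of E to δ, β at j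
  obtain ⟨ε, hεE, hεj, hεge, hεeq⟩ := hE.2.2 δ hδ β hβ j hδj
  have hβε : β ≤ ε := by
    intro i
    rcases eq_or_ne i j with rfl | hij
    · exact hδj ▸ hεj.le
    · have h1 := hεge i hij
      rwa [min_eq_right (hβδ.le i)] at h1
  -- Step 4: consider m = ε ⊓ α
  have hmF : ε ⊓ α ∈ F := hF1 ε (hEF hεE) α hαF
  have hβm : β < ε ⊓ α := by
    refine Pi.lt_def.mpr ⟨le_inf hβε hβα.le, j, ?_⟩
    show β j < (ε j) ⊓ (α j)
    exact lt_inf_iff.mpr ⟨hδj ▸ hεj, hj⟩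
  rcases eq_or_lt_of_le (inf_le_right : ε ⊓ α ≤ α) with h | h
  · -- m = α, so α ≤ ε
    have hαε : α ≤ ε := h ▸ (inf_le_left : ε ⊓ α ≤ ε)
    have hm'E : ε ⊓ β' ∈ E := hE.2.1 ε hεE β' hβ'
    have hαm' : α ≤ ε ⊓ β' := le_inf hαε hαβ'.le
    have hαm'lt : α < ε ⊓ β' := lt_of_le_of_ne hαm' (fun he => hαE (he ▸ hm'E))
    have hm'β' : ε ⊓ β' = β' :=
      (inf_le_right : ε ⊓ β' ≤ β').lt_or_eq.resolve_left (hβ'min _ hm'E hαm'lt)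
    have hβ'ε : β' ≤ ε := hm'β' ▸ (inf_le_left : ε ⊓ β' ≤ ε)
    obtain ⟨-, i, hi⟩ := Pi.lt_def.mp hβδ
    have hij : i ≠ j := fun he => by subst he; omega
    have hεi : ε i = min (δ i) (β i) := hεeq i hij (by omega)
    rw [min_eq_right (hβδ.le i)] at hεi
    have h1 : β' i ≤ ε i := hβ'ε i
    have h2 : δ i ≤ β' i := hδβ'.le i
    omega
  · by_cases hmE : ε ⊓ α ∈ E
    · exact hβmax _ hmE h hβm
    · exact hαmin _ ⟨hmF, hmE⟩ h
end

section
/- Let S be a good semigroup and let E, F ∈ 𝔊_S with E ⊆ F. Then E = F if and only if d(F∖E) = 0. -/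
set_option linter.unusedSectionVars false

namespace Aux
open GoodSemigroup

variable {I : Type*} [Fintype I]

/-- Saturated chain as an inductive predicate. -/
inductive Sat (G : Set (I → ℤ)) : (I → ℤ) → (I → ℤ) → ℕ → Prop
  | nil (a : I → ℤ) : Sat G a a 0
  | cons {a t b : I → ℤ} {n : ℕ} (h : Consecutive G a t) (ht : Sat G t b n) :
      Sat G a b (n + 1)

lemma Sat.le {G : Set (I → ℤ)} {a b : I → ℤ} {n : ℕ} (h : Sat G a b n) : a ≤ b := by
  induction h with
  | nil => exact le_rfl
  | cons h _ ih => exact le_trans h.2.2.1.le ih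

lemma Sat.eq_of_zero {G : Set (I → ℤ)} {a b : I → ℤ} (h : Sat G a b 0) : a = b := by
  cases h; rfl

lemma Sat.lt {G : Set (I → ℤ)} {a b : I → ℤ} {n : ℕ} (h : Sat G a b (n + 1)) : a < b := by
  cases h with
  | cons h ht => exact lt_of_lt_of_le h.2.2.1 ht.le

lemma Sat.right_mem {G : Set (I → ℤ)} {a b : I → ℤ} {n : ℕ} (h : Sat G a b (n + 1)) :
    b ∈ G := by
  induction n generalizing a with
  | zero => cases h with | cons hc ht => rw [← ht.eq_of_zero]; exact hc.2.1
  | succ k ih => cases h with | cons hc ht => exact ih ht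

lemma Sat.concat {G : Set (I → ℤ)} {a b c : I → ℤ} {p q : ℕ}
    (h1 : Sat G a b p) (h2 : Sat G b c q) : Sat G a c (p + q) := by
  induction h1 with
  | nil => simpa using h2
  | cons hc ht ih =>
      have := Sat.cons hc (ih h2)
      convert this using 1
      omega

lemma Sat.snoc_decomp {G : Set (I → ℤ)} {a b : I → ℤ} {n : ℕ} (h : Sat G a b (n + 1)) :
    ∃ p, Sat G a p n ∧ Consecutive G p b := by
  induction n generalizing a with
  | zero =>
      cases h with
      | cons hc ht => exact ⟨a, Sat.nil a, by rwa [← ht.eq_of_zero]⟩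
  | succ k ih =>
      cases h with
      | cons hc ht =>
          obtain ⟨p, hp, hpc⟩ := ih ht
          exact ⟨p, Sat.cons hc hp, hpc⟩

/-- measure for inductions -/
def meas (a b : I → ℤ) : ℕ := (∑ i, (b i - a i)).toNat

lemma exists_lt_coord {a b : I → ℤ} (hab : a ≤ b) (hne : a ≠ b) : ∃ j, a j < b j := by
  obtain ⟨j, hj⟩ := Function.ne_iff.mp hne
  exact ⟨j, lt_of_le_of_ne (hab j) hj⟩

lemma meas_pos {a b : I → ℤ} (hab : a ≤ b) (hne : a ≠ b) : 1 ≤ meas a b := by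
  obtain ⟨j, hj⟩ := exists_lt_coord hab hne
  have h1 : (1 : ℤ) ≤ ∑ i, (b i - a i) := by
    calc (1:ℤ) ≤ b j - a j := by omega
    _ ≤ ∑ i, (b i - a i) :=
        Finset.single_le_sum (f := fun i => b i - a i)
          (fun i _ => sub_nonneg.mpr (hab i)) (Finset.mem_univ j)
  unfold meas; omega

lemma meas_lt_left {a t b : I → ℤ} (h1 : a ≤ t) (hne : a ≠ t) (h2 : t ≤ b) :
    meas t b < meas a b := by
  have hsum : ∑ i, (b i - t i) < ∑ i, (b i - a i) := by
    obtain ⟨j, hj⟩ := exists_lt_coord h1 hne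
    exact Finset.sum_lt_sum (fun i _ => sub_le_sub_left (h1 i) (b i))
      ⟨j, Finset.mem_univ j, sub_lt_sub_left hj (b j)⟩
  have hnn : (0:ℤ) ≤ ∑ i, (b i - t i) :=
    Finset.sum_nonneg (fun i _ => sub_nonneg.mpr (h2 i))
  unfold meas; omega

lemma meas_lt_right {a t b : I → ℤ} (h1 : a ≤ t) (h2 : t ≤ b) (hne : t ≠ b) :
    meas a t < meas a b := by
  have hsum : ∑ i, (t i - a i) < ∑ i, (b i - a i) := by
    obtain ⟨j, hj⟩ := exists_lt_coord h2 hne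
    exact Finset.sum_lt_sum (fun i _ => sub_le_sub_right (h2 i) (a i))
      ⟨j, Finset.mem_univ j, sub_lt_sub_right hj (a j)⟩
  have hnn : (0:ℤ) ≤ ∑ i, (t i - a i) :=
    Finset.sum_nonneg (fun i _ => sub_nonneg.mpr (h1 i))
  unfold meas; omega

lemma finite_box (G : Set (I → ℤ)) (a b : I → ℤ) :
    {g | g ∈ G ∧ a ≤ g ∧ g ≤ b}.Finite := by
  classical
  exact (Set.finite_Icc a b).subset (fun g hg => ⟨hg.2.1, hg.2.2⟩)

lemma exists_minimal_elt {s : Set (I → ℤ)} (hs : s.Finite) (hne : s.Nonempty) :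
    ∃ m ∈ s, ∀ x ∈ s, ¬ x < m := by
  classical
  obtain ⟨m, hm, hmin⟩ := Finset.exists_minimal (s := hs.toFinset) (by simpa using hne)
  refine ⟨m, by simpa using hm, fun x hx hlt => hlt.not_ge (hmin (by simpa using hx) hlt.le)⟩

lemma exists_min_of_infClosed {s : Set (I → ℤ)} (hs : s.Finite) (hne : s.Nonempty)
    (hcl : ∀ x ∈ s, ∀ y ∈ s, x ⊓ y ∈ s) : ∃ z ∈ s, ∀ g ∈ s, z ≤ g := by
  obtain ⟨m, hm, hmin⟩ := exists_minimal_elt hs hne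
  refine ⟨m, hm, fun g hg => ?_⟩
  have h1 : m ⊓ g ∈ s := hcl m hm g hg
  have h3 : m ⊓ g = m := ((inf_le_left : m ⊓ g ≤ m).lt_or_eq).resolve_left (hmin _ h1)
  exact inf_eq_left.mp h3

end Aux

namespace Aux
open GoodSemigroup

variable {I : Type*} [Fintype I]

set_option linter.unusedSectionVars false

lemma exists_sat (G : Set (I → ℤ)) :
    ∀ N, ∀ a b : I → ℤ, meas a b ≤ N → a ∈ G → b ∈ G → a ≤ b → ∃ n, Sat G a b n := by
  intro N
  induction N with
  | zero =>
      intro a b hm ha hb hab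
      rcases eq_or_ne a b with rfl | hne
      · exact ⟨0, Sat.nil a⟩
      · exact absurd hm (by have := meas_pos hab hne; omega)
  | succ N ih =>
      intro a b hm ha hb hab
      rcases eq_or_ne a b with rfl | hne
      · exact ⟨0, Sat.nil a⟩
      · set s : Set (I → ℤ) := {g | g ∈ G ∧ (a < g ∧ g ≤ b)} with hs
        have hfin : s.Finite := by
          apply (finite_box G a b).subset
          rintro g ⟨hg, h1, h2⟩; exact ⟨hg, h1.le, h2⟩
        have hne' : s.Nonempty := ⟨b, hb, lt_of_le_of_ne hab hne, le_rfl⟩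
        obtain ⟨t, ⟨htG, hat, htb⟩, hmin⟩ := exists_minimal_elt hfin hne'
        have hcons : Consecutive G a t := by
          refine ⟨ha, htG, hat, fun c hc ⟨h1, h2⟩ => ?_⟩
          exact hmin c ⟨hc, h1, le_trans h2.le htb⟩ h2
        have hmeas : meas t b ≤ N := by
          have := meas_lt_left hat.le (ne_of_lt hat) htb
          omega
        obtain ⟨n, hn⟩ := ih t b hmeas htG hb htb
        exact ⟨n + 1, Sat.cons hcons hn⟩

lemma exists_sat' (G : Set (I → ℤ)) {a b : I → ℤ} (ha : a ∈ G) (hb : b ∈ G)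
    (hab : a ≤ b) : ∃ n, Sat G a b n :=
  exists_sat G (meas a b) a b le_rfl ha hb hab

lemma sat_mono {E F : Set (I → ℤ)} (hEF : E ⊆ F) {a b : I → ℤ} {n : ℕ}
    (h : Sat E a b n) : ∃ m, n ≤ m ∧ Sat F a b m := by
  induction h with
  | nil a => exact ⟨0, le_rfl, Sat.nil a⟩
  | cons hc ht ih =>
      obtain ⟨m', hm', hsat'⟩ := ih
      obtain ⟨k, hk⟩ := exists_sat' F (hEF hc.1) (hEF hc.2.1) hc.2.2.1.le
      have hk1 : 1 ≤ k := by
        rcases k with _ | k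
        · exact absurd hk.eq_of_zero (ne_of_lt hc.2.2.1)
        · omega
      exact ⟨k + m', by omega, hk.concat hsat'⟩

/-- The key "semimodularity" lemma: the least common upper bound of two elements
covering `a` covers each of them. -/
lemma sm_aux {G : Set (I → ℤ)} (hG1 : SatE1 G) (hG2 : SatE2 G)
    {a u v z b : I → ℤ}
    (hu : Consecutive G a u) (hv : Consecutive G a v) (huv : u ≠ v)
    (hzG : z ∈ G) (hzu : u ≤ z) (hzv : v ≤ z) (hzb : z ≤ b)
    (hzmin : ∀ g ∈ G, u ≤ g → v ≤ g → g ≤ b → z ≤ g) :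
    Consecutive G u z := by
  have hau : a < u := hu.2.2.1
  have hav : a < v := hv.2.2.1
  -- u ≠ z
  have huz : u < z := by
    refine lt_of_le_of_ne hzu (fun h => ?_)
    subst h
    exact hu.2.2.2 v hv.2.1 ⟨hav, lt_of_le_of_ne hzv (Ne.symm huv)⟩
  refine ⟨hu.2.1, hzG, huz, fun e heG ⟨hue, hez⟩ => ?_⟩
  -- u ⊓ v = a
  have huva : u ⊓ v = a := by
    have h1 : u ⊓ v ∈ G := hG1 u hu.2.1 v hv.2.1
    have h2 : a ≤ u ⊓ v := le_inf hau.le hav.le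
    rcases lt_or_eq_of_le (inf_le_left : u ⊓ v ≤ u) with hlt | heq
    · rcases lt_or_eq_of_le h2 with hlt2 | heq2
      · exact absurd ⟨hlt2, hlt⟩ (hu.2.2.2 _ h1)
      · exact heq2.symm
    · exfalso
      have : u ≤ v := by rw [← heq]; exact inf_le_right
      exact hv.2.2.2 u hu.2.1 ⟨hau, lt_of_le_of_ne this huv⟩
  -- e ⊓ v = a
  have heva : e ⊓ v = a := by
    have h1 : e ⊓ v ∈ G := hG1 e heG v hv.2.1
    have h2 : a ≤ e ⊓ v := le_inf (le_trans hau.le hue.le) hav.le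
    rcases lt_or_eq_of_le (inf_le_right : e ⊓ v ≤ v) with hlt | heq
    · rcases lt_or_eq_of_le h2 with hlt2 | heq2
      · exact absurd ⟨hlt2, hlt⟩ (hv.2.2.2 _ h1)
      · exact heq2.symm
    · exfalso
      have hve : v ≤ e := by rw [← heq]; exact inf_le_left
      have : z ≤ e := hzmin e heG hue.le hve (le_trans hez.le hzb)
      exact absurd hez (not_lt_of_ge this)
  -- coordinate j with a j < v j
  obtain ⟨j, hj⟩ := exists_lt_coord hav.le (ne_of_lt hav)
  have huj : u j = a j := by
    have h5 : min (u j) (v j) = a j := congrFun huva j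
    rcases min_cases (u j) (v j) with ⟨h4, _⟩ | ⟨h4, _⟩ <;> omega
  have hej : e j = a j := by
    have h5 : min (e j) (v j) = a j := congrFun heva j
    rcases min_cases (e j) (v j) with ⟨h4, _⟩ | ⟨h4, _⟩ <;> omega
  -- apply E2 to (u, e) at j
  have hune : u ≠ e := ne_of_lt hue
  obtain ⟨ε, hεG, hεj, hεge, hεpin⟩ := hG2 u hu.2.1 e heG j (by rw [huj, hej])
  have hεu : u ≤ ε := by
    intro i
    rcases eq_or_ne i j with rfl | hij
    · exact hεj.le
    · have h := hεge i hij
      rwa [min_eq_left (hue.le i)] at h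
  -- i₀ with u i₀ < e i₀, i₀ ≠ j
  obtain ⟨i₀, hi₀⟩ := exists_lt_coord hue.le hune
  have hi₀j : i₀ ≠ j := fun h => by rw [h, huj, hej] at hi₀; omega
  have hpin : ε i₀ = u i₀ := by
    have h := hεpin i₀ hi₀j (ne_of_lt hi₀)
    rw [min_eq_left hi₀.le] at h
    exact h
  -- e₂ := ε ⊓ z
  set e₂ := ε ⊓ z with he₂
  have he₂G : e₂ ∈ G := hG1 ε hεG z hzG
  have hue₂ : u ≤ e₂ := le_inf hεu hzu
  have he₂j : a j < e₂ j := by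
    have h1 : a j < ε j := by omega
    have h2 : v j ≤ z j := hzv j
    have h3 : e₂ j = min (ε j) (z j) := rfl
    rcases min_cases (ε j) (z j) with ⟨h4, _⟩ | ⟨h4, _⟩ <;> omega
  -- e₂ ⊓ v = v, i.e. v ≤ e₂
  have hve₂ : v ≤ e₂ := by
    have h1 : e₂ ⊓ v ∈ G := hG1 e₂ he₂G v hv.2.1
    have h2 : a ≤ e₂ ⊓ v := le_inf (le_trans hau.le hue₂) hav.le
    have h3 : e₂ ⊓ v ≠ a := by
      intro h
      have h5 : min (e₂ j) (v j) = a j := congrFun h j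
      rcases min_cases (e₂ j) (v j) with ⟨h4, _⟩ | ⟨h4, _⟩ <;> omega
    rcases lt_or_eq_of_le (inf_le_right : e₂ ⊓ v ≤ v) with hlt | heq
    · exact absurd ⟨lt_of_le_of_ne h2 (Ne.symm h3), hlt⟩ (hv.2.2.2 _ h1)
    · rw [← heq]; exact inf_le_left
  -- z ≤ e₂, so z = e₂; contradiction at i₀
  have hze₂ : z ≤ e₂ := hzmin e₂ he₂G hue₂ hve₂ (le_trans inf_le_right hzb)
  have hle : e₂ i₀ ≤ ε i₀ := (inf_le_left : ε ⊓ z ≤ ε) i₀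
  have hfin : z i₀ ≤ u i₀ := le_trans (hze₂ i₀) (le_trans hle hpin.le)
  exact lt_irrefl (z i₀) (lt_of_lt_of_le (lt_of_le_of_lt hfin hi₀) (hez.le i₀))

lemma sm {G : Set (I → ℤ)} (hG1 : SatE1 G) (hG2 : SatE2 G)
    {a u v b : I → ℤ}
    (hu : Consecutive G a u) (hv : Consecutive G a v) (huv : u ≠ v)
    (hbG : b ∈ G) (hub : u ≤ b) (hvb : v ≤ b) :
    ∃ z, Consecutive G u z ∧ Consecutive G v z ∧ z ≤ b := by
  set s : Set (I → ℤ) := {g | g ∈ G ∧ (u ≤ g ∧ v ≤ g) ∧ g ≤ b} with hs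
  have hfin : s.Finite := by
    apply (finite_box G u b).subset
    rintro g ⟨hg, ⟨h1, _⟩, h2⟩; exact ⟨hg, h1, h2⟩
  have hne : s.Nonempty := ⟨b, hbG, ⟨hub, hvb⟩, le_rfl⟩
  have hcl : ∀ x ∈ s, ∀ y ∈ s, x ⊓ y ∈ s := by
    rintro x ⟨hxG, ⟨hx1, hx2⟩, hx3⟩ y ⟨hyG, ⟨hy1, hy2⟩, hy3⟩
    exact ⟨hG1 x hxG y hyG, ⟨le_inf hx1 hy1, le_inf hx2 hy2⟩, le_trans inf_le_left hx3⟩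
  obtain ⟨z, ⟨hzG, ⟨hzu, hzv⟩, hzb⟩, hzmin⟩ := exists_min_of_infClosed hfin hne hcl
  have hmin' : ∀ g ∈ G, u ≤ g → v ≤ g → g ≤ b → z ≤ g :=
    fun g hg h1 h2 h3 => hzmin g ⟨hg, ⟨h1, h2⟩, h3⟩
  have hmin'' : ∀ g ∈ G, v ≤ g → u ≤ g → g ≤ b → z ≤ g :=
    fun g hg h1 h2 h3 => hzmin g ⟨hg, ⟨h2, h1⟩, h3⟩
  exact ⟨z, sm_aux hG1 hG2 hu hv huv hzG hzu hzv hzb hmin',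
    sm_aux hG1 hG2 hv hu (Ne.symm huv) hzG hzv hzu hzb hmin'', hzb⟩

/-- (E4): all saturated chains between two points have the same length. -/
lemma sat_unique {G : Set (I → ℤ)} (hG1 : SatE1 G) (hG2 : SatE2 G) :
    ∀ N, ∀ a b : I → ℤ, ∀ n m : ℕ, meas a b ≤ N →
      Sat G a b n → Sat G a b m → n = m := by
  intro N
  induction N with
  | zero =>
      intro a b n m hm h1 h2
      rcases n with _ | n
      · obtain rfl := h1.eq_of_zero
        rcases m with _ | m
        · rfl
        · exact absurd h2.lt (lt_irrefl a)
      · exact absurd hm (by have := meas_pos h1.le (ne_of_lt h1.lt); omega)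
  | succ N ih =>
      intro a b n m hm h1 h2
      rcases n with _ | n
      · obtain rfl := h1.eq_of_zero
        rcases m with _ | m
        · rfl
        · exact absurd h2.lt (lt_irrefl a)
      · rcases m with _ | m
        · obtain rfl := h2.eq_of_zero
          exact absurd h1.lt (lt_irrefl a)
        · -- both chains nonempty
          cases h1 with
          | @cons _ t₁ _ _ hc1 ht1 =>
            cases h2 with
            | @cons _ t₂ _ _ hc2 ht2 =>
              rcases eq_or_ne t₁ t₂ with rfl | hne
              · have hmeas : meas t₁ b ≤ N := by
                  have := meas_lt_left hc1.2.2.1.le (ne_of_lt hc1.2.2.1) ht1.le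
                  omega
                have := ih t₁ b n m hmeas ht1 ht2
                omega
              · -- t₁ ≠ t₂
                -- sub-case n = 0 : t₁ = b
                rcases n with _ | n
                · obtain rfl := ht1.eq_of_zero
                  exfalso
                  have hlt : t₂ < t₁ := lt_of_le_of_ne ht2.le (Ne.symm hne)
                  exact hc1.2.2.2 t₂ hc2.2.1 ⟨hc2.2.2.1, hlt⟩
                · rcases m with _ | m
                  · obtain rfl := ht2.eq_of_zero
                    exfalso
                    have hlt : t₁ < t₂ := lt_of_le_of_ne ht1.le hne
                    exact hc2.2.2.2 t₁ hc1.2.1 ⟨hc1.2.2.1, hlt⟩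
                  · -- both ≥ 2: use semimodularity
                    have hbG : b ∈ G := ht1.right_mem
                    obtain ⟨z, hz1, hz2, hzb⟩ :=
                      sm hG1 hG2 hc1 hc2 hne hbG ht1.le ht2.le
                    obtain ⟨ℓ, hℓ⟩ := exists_sat' G hz1.2.1 hbG hzb
                    have e1 : Sat G t₁ b (ℓ + 1) := Sat.cons hz1 hℓ
                    have e2 : Sat G t₂ b (ℓ + 1) := Sat.cons hz2 hℓ
                    have hm1 : meas t₁ b ≤ N := by
                      have := meas_lt_left hc1.2.2.1.le (ne_of_lt hc1.2.2.1) ht1.le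
                      omega
                    have hm2 : meas t₂ b ≤ N := by
                      have := meas_lt_left hc2.2.2.1.le (ne_of_lt hc2.2.2.1) ht2.le
                      omega
                    have r1 := ih t₁ b (n + 1) (ℓ + 1) hm1 ht1 e1
                    have r2 := ih t₂ b (m + 1) (ℓ + 1) hm2 ht2 e2
                    omega

lemma sat_unique' {G : Set (I → ℤ)} (hG1 : SatE1 G) (hG2 : SatE2 G)
    {a b : I → ℤ} {n m : ℕ} (h1 : Sat G a b n) (h2 : Sat G a b m) : n = m :=
  sat_unique hG1 hG2 (meas a b) a b n m le_rfl h1 h2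

end Aux

namespace Aux
open GoodSemigroup

variable {I : Type*} [Fintype I]

set_option linter.unusedSectionVars false

/-- Pushing elements up along coordinates that are above the conductor. -/
lemma conductor_push {E : Set (I → ℤ)} (hE1 : SatE1 E) (hE2 : SatE2 E) {γ : I → ℤ}
    (hγ : ∀ f : I → ℤ, 0 ≤ f → γ + f ∈ E) :
    ∀ N, ∀ w v : I → ℤ, meas w v ≤ N → w ∈ E → w ≤ v →
      (∀ i, w i ≠ v i → γ i ≤ w i) → v ∈ E := by
  classical
  intro N
  induction N with
  | zero =>
      intro w v hm hwE hwv hcond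
      rcases eq_or_ne w v with rfl | hne
      · exact hwE
      · exact absurd hm (by have := meas_pos hwv hne; omega)
  | succ N ih =>
      intro w v hm hwE hwv hcond
      rcases eq_or_ne w v with rfl | hne
      · exact hwE
      · obtain ⟨j, hj⟩ := exists_lt_coord hwv hne
        have hγj : γ j ≤ w j := hcond j (by omega)
        by_cases hall : ∀ i, γ i ≤ w i
        · -- v ≥ γ, directly in E
          have h0 : 0 ≤ v - γ := fun i => by
            have ha := hall i
            have hb : w i ≤ v i := hwv i
            simp only [Pi.sub_apply, Pi.zero_apply]
            omega
          have h := hγ (v - γ) h0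
          have hveq : γ + (v - γ) = v := by funext i; simp
          rwa [hveq] at h
        · push_neg at hall
          obtain ⟨i₀, hi₀⟩ := hall
          have hi₀j : i₀ ≠ j := fun h => by subst h; omega
          set b : I → ℤ := fun i => if i = j then w j else max (w i) (γ i) + 1 with hb
          have hbE : b ∈ E := by
            have h0 : 0 ≤ b - γ := fun i => by
              simp only [Pi.sub_apply, Pi.zero_apply, hb]
              by_cases h : i = j
              · subst h; simp; omega
              · simp [h]; omega
            have h := hγ (b - γ) h0
            have : γ + (b - γ) = b := by funext i; simp
            rwa [this] at h
          have hwb : ∀ i, i ≠ j → w i < b i := fun i h => by simp [hb, h]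
          obtain ⟨ε, hεE, hεj, hεge, hεpin⟩ := hE2 w hwE b hbE j (by simp [hb])
          have hεw : ∀ i, i ≠ j → ε i = w i := by
            intro i h
            have h1 := hεpin i h (ne_of_lt (hwb i h))
            rwa [min_eq_left (hwb i h).le] at h1
          -- cap
          set c : I → ℤ := fun i => if i = j then v j else max (ε i) (γ i) + 1 with hc
          have hcE : c ∈ E := by
            have h0 : 0 ≤ c - γ := fun i => by
              simp only [Pi.sub_apply, Pi.zero_apply, hc]
              by_cases h : i = j
              · subst h; simp; omega
              · simp [h]; omega
            have h := hγ (c - γ) h0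
            have : γ + (c - γ) = c := by funext i; simp
            rwa [this] at h
          set w' : I → ℤ := ε ⊓ c with hw'
          have hw'E : w' ∈ E := hE1 ε hεE c hcE
          have hw'i : ∀ i, i ≠ j → w' i = w i := by
            intro i h
            have h1 : w' i = min (ε i) (c i) := rfl
            have h2 : c i = max (ε i) (γ i) + 1 := by simp [hc, h]
            have h3 := hεw i h
            rcases max_cases (ε i) (γ i) with ⟨h4, _⟩ | ⟨h4, _⟩ <;>
              rcases min_cases (ε i) (c i) with ⟨h5, _⟩ | ⟨h5, _⟩ <;> omega
          have hw'j : w j < w' j ∧ w' j ≤ v j := by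
            have h1 : w' j = min (ε j) (c j) := rfl
            have h2 : c j = v j := by simp [hc]
            rcases min_cases (ε j) (c j) with ⟨h5, _⟩ | ⟨h5, _⟩ <;> omega
          have hww' : w ≤ w' := by
            intro i
            rcases eq_or_ne i j with rfl | h
            · exact hw'j.1.le
            · exact (hw'i i h).ge
          have hw'v : w' ≤ v := by
            intro i
            rcases eq_or_ne i j with rfl | h
            · exact hw'j.2
            · rw [hw'i i h]; exact hwv i
          have hcond' : ∀ i, w' i ≠ v i → γ i ≤ w' i := by
            intro i h
            rcases eq_or_ne i j with rfl | hij
            · omega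
            · rw [hw'i i hij] at h ⊢; exact hcond i h
          have hmeas : meas w' v ≤ N := by
            have := meas_lt_left hww' (fun h => by
              have := congrFun h j; omega) hw'v
            omega
          exact ih w' v hmeas hw'E hw'v hcond'

/-- The main strictness lemma. -/
lemma msl {E F : Set (I → ℤ)} (hE1 : SatE1 E) (hE2 : SatE2 E)
    (hF1 : SatE1 F) (hF2 : SatE2 F) (hEF : E ⊆ F) :
    ∀ N, ∀ x t y : I → ℤ, ∀ ne nf : ℕ, meas x t ≤ N → x ∈ E → t ∈ E →
      y ∈ F → y ∉ E → x ≤ y → y ≤ t →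
      Sat E x t ne → Sat F x t nf → ne + 1 ≤ nf := by
  intro N
  induction N with
  | zero =>
      intro x t y ne nf hm hxE htE hyF hyE hxy hyt hcE hcF
      exfalso
      have hxyne : x ≠ y := fun h => hyE (h ▸ hxE)
      have hxt : x ≠ t := fun h => hxyne (le_antisymm hxy (h ▸ hyt))
      exact absurd hm (by have := meas_pos hcE.le hxt; omega)
  | succ N ih =>
      intro x t y ne nf hm hxE htE hyF hyE hxy hyt hcE hcF
      have hxyne : x ≠ y := fun h => hyE (h ▸ hxE)
      have hytne : y ≠ t := fun h => hyE (h ▸ htE)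
      have hxt : x ≠ t := fun h => hxyne (le_antisymm hxy (h ▸ hyt))
      have hxtle : x ≤ t := hcE.le
      -- minimal bad element β
      set B : Set (I → ℤ) := {f | (f ∈ F ∧ f ∉ E) ∧ x ≤ f ∧ f ≤ t} with hB
      have hBfin : B.Finite := by
        apply (finite_box F x t).subset
        rintro g ⟨⟨h1, _⟩, h2, h3⟩; exact ⟨h1, h2, h3⟩
      have hBne : B.Nonempty := ⟨y, ⟨hyF, hyE⟩, hxy, hyt⟩
      obtain ⟨β, ⟨⟨hβF, hβE⟩, hxβ, hβt⟩, hβmin⟩ := exists_minimal_elt hBfin hBne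
      have hxβne : x ≠ β := fun h => hβE (h ▸ hxE)
      have hβtne : β ≠ t := fun h => hβE (h ▸ htE)
      have hxβlt : x < β := lt_of_le_of_ne hxβ hxβne
      -- F-chain from x to β
      obtain ⟨k, hk⟩ := exists_sat' F (hEF hxE) hβF hxβ
      rcases k with _ | k'
      · exact absurd hk.eq_of_zero hxβne
      obtain ⟨p, hp, hpβ⟩ := hk.snoc_decomp
      have hpE : p ∈ E := by
        by_contra hpE'
        exact hβmin p ⟨⟨hpβ.1, hpE'⟩, hp.le, le_trans hpβ.2.2.1.le hβt⟩ hpβ.2.2.1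
      rcases k' with _ | k''
      · -- p = x : β covers x in F
        obtain rfl : x = p := hp.eq_of_zero
        have hconsxβ : Consecutive F x β := hpβ
        by_cases hex : ∃ e, e ∈ E ∧ β ≤ e ∧ e ≤ t ∧ e ≠ t
        · obtain ⟨e, heE, hβe, het, hent⟩ := hex
          have hxe : x < e := lt_of_lt_of_le hxβlt hβe
          obtain ⟨a₁, c1⟩ := exists_sat' E hxE heE hxe.le
          obtain ⟨a₂, c2⟩ := exists_sat' E heE htE het
          have hne' : ne = a₁ + a₂ := sat_unique' hE1 hE2 hcE (c1.concat c2)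
          obtain ⟨b₁, d1⟩ := exists_sat' F (hEF hxE) (hEF heE) hxe.le
          obtain ⟨b₂, d2⟩ := exists_sat' F (hEF heE) (hEF htE) het
          have hnf' : nf = b₁ + b₂ := sat_unique' hF1 hF2 hcF (d1.concat d2)
          have hmeas : meas x e ≤ N := by
            have := meas_lt_right hxe.le het hent; omega
          have h1 : a₁ + 1 ≤ b₁ :=
            ih x e β a₁ b₁ hmeas hxE heE hβF hβE hxβ hβe c1 d1
          obtain ⟨m2, hm2, cm2⟩ := sat_mono hEF c2
          have h2 : b₂ = m2 := sat_unique' hF1 hF2 d2 cm2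
          omega
        · -- no such e : E has nothing strictly between x and t
          have noE : ∀ e ∈ E, ¬(x < e ∧ e < t) := by
            rintro e heE ⟨hxe, het⟩
            have hβe : ¬ β ≤ e := fun h => hex ⟨e, heE, h, het.le, ne_of_lt het⟩
            have hdx : e ⊓ β = x := by
              have hdF : e ⊓ β ∈ F := hF1 e (hEF heE) β hβF
              have h1 : x ≤ e ⊓ β := le_inf hxe.le hxβ
              have h2 : e ⊓ β ≠ β := fun h => hβe (inf_eq_right.mp h)
              by_contra h3
              exact hconsxβ.2.2.2 (e ⊓ β) hdF
                ⟨lt_of_le_of_ne h1 (Ne.symm h3),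
                 lt_of_le_of_ne inf_le_right h2⟩
            obtain ⟨j, hj⟩ := exists_lt_coord hxβ hxβne
            have hej : e j = x j := by
              have h5 : min (e j) (β j) = x j := congrFun hdx j
              rcases min_cases (e j) (β j) with ⟨h4, _⟩ | ⟨h4, _⟩ <;> omega
            obtain ⟨ε, hεE, hεj, hεge, hεpin⟩ := hE2 x hxE e heE j hej.symm
            have hxε : x ≤ ε := by
              intro i
              rcases eq_or_ne i j with rfl | hij
              · exact hεj.le
              · have h := hεge i hij
                rwa [min_eq_left (hxe.le i)] at h
            set εh : I → ℤ := ε ⊓ t with hεh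
            have hεhE : εh ∈ E := hE1 ε hεE t htE
            have hxεh : x ≤ εh := le_inf hxε hxtle
            have hεhj : x j < εh j := by
              have h1 : εh j = min (ε j) (t j) := rfl
              have h2 : β j ≤ t j := hβt j
              rcases min_cases (ε j) (t j) with ⟨h4, _⟩ | ⟨h4, _⟩ <;> omega
            have hβεh : β ≤ εh := by
              have hdF : εh ⊓ β ∈ F := hF1 εh (hEF hεhE) β hβF
              have h1 : x ≤ εh ⊓ β := le_inf hxεh hxβ
              have h2 : εh ⊓ β ≠ x := fun h => by
                have h5 : min (εh j) (β j) = x j := congrFun h j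
                rcases min_cases (εh j) (β j) with ⟨h4, _⟩ | ⟨h4, _⟩ <;> omega
              have h3 : εh ⊓ β = β := by
                by_contra h3
                exact hconsxβ.2.2.2 (εh ⊓ β) hdF
                  ⟨lt_of_le_of_ne h1 (Ne.symm h2),
                   lt_of_le_of_ne inf_le_right h3⟩
              exact inf_eq_right.mp h3
            obtain ⟨i₀, hi₀⟩ := exists_lt_coord hxe.le (ne_of_lt hxe)
            have hi₀j : i₀ ≠ j := fun h => by rw [h, hej] at hi₀; omega
            have hpin : ε i₀ = x i₀ := by
              have h := hεpin i₀ hi₀j (ne_of_lt hi₀)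
              rwa [min_eq_left hi₀.le] at h
            have hεht : εh ≠ t := by
              intro h
              have h1 : εh i₀ ≤ ε i₀ := (inf_le_left : ε ⊓ t ≤ ε) i₀
              have h2 : e i₀ ≤ t i₀ := het.le i₀
              have h3 := congrFun h i₀
              omega
            exact hex ⟨εh, hεhE, hβεh, inf_le_right, hεht⟩
          have hconsE : Consecutive E x t :=
            ⟨hxE, htE, lt_of_le_of_ne hxtle hxt, noE⟩
          have hne' : ne = 1 := sat_unique' hE1 hE2 hcE (Sat.cons hconsE (Sat.nil t))
          obtain ⟨b₂, d2⟩ := exists_sat' F hβF (hEF htE) hβt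
          have hb₂ : 1 ≤ b₂ := by
            rcases b₂ with _ | b₂
            · exact absurd d2.eq_of_zero hβtne
            · omega
          have hnf' : nf = 1 + b₂ :=
            sat_unique' hF1 hF2 hcF ((Sat.cons hconsxβ (Sat.nil β)).concat d2)
          omega
      · -- p ≠ x
        have hxp : x < p := hp.lt
        have hpt : p ≤ t := le_trans hpβ.2.2.1.le hβt
        obtain ⟨a₁, c1⟩ := exists_sat' E hxE hpE hxp.le
        obtain ⟨a₂, c2⟩ := exists_sat' E hpE htE hpt
        have hne' : ne = a₁ + a₂ := sat_unique' hE1 hE2 hcE (c1.concat c2)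
        obtain ⟨b₂, d2⟩ := exists_sat' F (hEF hpE) (hEF htE) hpt
        have hmeas : meas p t ≤ N := by
          have := meas_lt_left hxp.le (ne_of_lt hxp) hpt; omega
        have h1 : a₂ + 1 ≤ b₂ :=
          ih p t β a₂ b₂ hmeas hpE htE hβF hβE hpβ.2.2.1.le hβt c2 d2
        obtain ⟨m1, hm1, cm1⟩ := sat_mono hEF c1
        have h2 : k'' + 1 = m1 := sat_unique' hF1 hF2 hp cm1
        have hnf' : nf = (k'' + 1) + b₂ := sat_unique' hF1 hF2 hcF (hp.concat d2)
        omega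

/-- Convert a `SaturatedChain` to `Sat`. -/
lemma satChain_to_sat {G : Set (I → ℤ)} :
    ∀ {n : ℕ} {c : Fin (n + 1) → I → ℤ} {a b : I → ℤ},
      SaturatedChain G n c a b → Sat G a b n := by
  intro n
  induction n with
  | zero =>
      rintro c a b ⟨h0, hl, _⟩
      have hab : a = b := by rw [← h0, ← hl]; rfl
      exact hab ▸ Sat.nil a
  | succ k ih =>
      rintro c a b ⟨h0, hl, hc⟩
      have hcons : Consecutive G a (c 1) := by
        have h := hc 0
        rw [Fin.castSucc_zero, h0, Fin.succ_zero_eq_one] at h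
        exact h
      have htail : SaturatedChain G k (fun i => c i.succ) (c 1) b := by
        refine ⟨?_, ?_, ?_⟩
        · show c (Fin.succ 0) = c 1
          rw [Fin.succ_zero_eq_one]
        · show c (Fin.last k).succ = b
          rw [Fin.succ_last]; exact hl
        · intro i
          have h := hc i.succ
          rw [← Fin.succ_castSucc] at h
          exact h
      exact Sat.cons hcons (ih htail)

end Aux

open GoodSemigroup
/-- Proposition 37: `E = F` if and only if `d(F∖E) = 0`. -/
theorem eq_iff_distance_zero {I : Type*} [Fintype I] [Nonempty I]
    (S E F : Set (I → ℤ)) (hS : IsGood S)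
    (hE : IsGoodIdeal S E) (hF : IsGoodIdeal S F) (hEF : E ⊆ F)
    (μE μF γE : I → ℤ)
    (hμE : IsLeast E μE) (hμF : IsLeast F μF) (hγE : IsLeast (cond E) γE)
    (nE nF : ℕ)
    (hcE : ∃ c, SaturatedChain E nE c μE γE)
    (hcF : ∃ c, SaturatedChain F nF c μF γE) :
    E = F ↔ (nF : ℤ) - (nE : ℤ) = 0 := by
  classical
  obtain ⟨hE0, hE1, hE2⟩ := hE
  obtain ⟨hF0, hF1, hF2⟩ := hF
  have hγcond : ∀ f : I → ℤ, 0 ≤ f → γE + f ∈ E := fun f hf => hγE.1 f hf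
  have hγmem : γE ∈ E := by simpa using hγcond 0 le_rfl
  obtain ⟨cE, hcE⟩ := hcE
  obtain ⟨cF, hcF⟩ := hcF
  have satE : Aux.Sat E μE γE nE := Aux.satChain_to_sat hcE
  have satF : Aux.Sat F μF γE nF := Aux.satChain_to_sat hcF
  constructor
  · intro hEq
    subst hEq
    have hμ : μE = μF := hμE.unique hμF
    rw [← hμ] at satF
    have := Aux.sat_unique' hE1 hE2 satE satF
    omega
  · intro h
    have hnn : nF = nE := by omega
    apply Set.Subset.antisymm hEF
    intro y0 hy0F
    by_contra hy0E
    have hμFE : μF ≤ μE := hμF.2 (hEF hμE.1)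
    set y := y0 ⊓ γE with hy
    have hyF : y ∈ F := hF1 y0 hy0F γE (hEF hγmem)
    have hyE : y ∉ E := by
      intro hyE
      apply hy0E
      apply Aux.conductor_push hE1 hE2 hγcond (Aux.meas y y0) y y0 le_rfl hyE inf_le_left
      intro i hi
      have h5 : y i = min (y0 i) (γE i) := rfl
      rcases min_cases (y0 i) (γE i) with ⟨h4, _⟩ | ⟨h4, _⟩ <;> omega
    by_cases hμ : μF = μE
    · have satF' : Aux.Sat F μE γE nF := by rwa [hμ] at satF
      have hxy : μE ≤ y := by rw [← hμ]; exact hμF.2 hyF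
      have := Aux.msl hE1 hE2 hF1 hF2 hEF (Aux.meas μE γE) μE γE y nE nF le_rfl
        hμE.1 hγmem hyF hyE hxy inf_le_right satE satF'
      omega
    · obtain ⟨b₀, c₀⟩ := Aux.exists_sat' F hμF.1 (hEF hμE.1) hμFE
      have hb₀ : 1 ≤ b₀ := by
        rcases b₀ with _ | b₀
        · exact absurd c₀.eq_of_zero hμ
        · omega
      obtain ⟨m, hm, cm⟩ := Aux.sat_mono hEF satE
      have : nF = b₀ + m := Aux.sat_unique' hF1 hF2 satF (c₀.concat cm)
      omega
end

section
/- Let E ⊆ F ⊆ G be semigroup ideals of a good semigroup S, each satisfying properties (E1) and (E4). Then d(G∖E) = d(G∖F) + d(F∖E). -/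
open GoodSemigroup

namespace GoodSemigroup
lemma chain_snoc {I : Type*} {T : Set (I → ℤ)} {n : ℕ} {c : Fin (n + 1) → I → ℤ}
    {a b d : I → ℤ} (h : SaturatedChain T n c a b) (hc : Consecutive T b d) :
    SaturatedChain T (n + 1) (Fin.snoc c d) a d := by
  obtain ⟨h0, hl, hcons⟩ := h
  refine ⟨?_, ?_, ?_⟩
  · show (Fin.snoc c d : Fin (n + 2) → I → ℤ) 0 = a
    have h00 : (0 : Fin (n + 2)) = Fin.castSucc 0 := rfl
    rw [h00, Fin.snoc_castSucc, h0]
  · simp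
  · intro i
    refine Fin.lastCases ?_ ?_ i
    · show Consecutive T ((Fin.snoc c d : Fin (n+2) → I → ℤ) (Fin.last n).castSucc)
        ((Fin.snoc c d : Fin (n+2) → I → ℤ) (Fin.last n).succ)
      have h1 : (Fin.snoc c d : Fin (n+2) → I → ℤ) (Fin.last n).castSucc = b := by
        rw [Fin.snoc_castSucc, hl]
      have h2 : (Fin.snoc c d : Fin (n+2) → I → ℤ) (Fin.last n).succ = d := by
        have hh : (Fin.last n).succ = Fin.last (n + 1) := rfl
        rw [hh, Fin.snoc_last]
      rw [h1, h2]; exact hc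
    · intro j
      show Consecutive T ((Fin.snoc c d : Fin (n+2) → I → ℤ) j.castSucc.castSucc)
        ((Fin.snoc c d : Fin (n+2) → I → ℤ) j.castSucc.succ)
      have h1 : (Fin.snoc c d : Fin (n+2) → I → ℤ) j.castSucc.castSucc = c j.castSucc :=
        Fin.snoc_castSucc ..
      have h2 : (Fin.snoc c d : Fin (n+2) → I → ℤ) j.castSucc.succ = c j.succ := by
        rw [Fin.succ_castSucc, Fin.snoc_castSucc]
      rw [h1, h2]; exact hcons j

lemma chain_extend {I : Type*} [Fintype I] [DecidableEq I] :
    ∀ (N : ℕ) {T : Set (I → ℤ)} {n : ℕ} {c : Fin (n + 1) → I → ℤ} {x y z : I → ℤ},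
    SaturatedChain T n c x y → (∀ w, y ≤ w → w ≤ z → w ∈ T) → y ≤ z →
    (∑ i, (z i - y i)) = (N : ℤ) → ∃ c', SaturatedChain T (n + N) c' x z := by
  intro N
  induction N with
  | zero =>
    intro T n c x y z hch hmem hle hsum
    have hnn : ∀ i ∈ Finset.univ, (0 : ℤ) ≤ z i - y i := by
      intro i _
      have := Pi.le_def.mp hle i
      omega
    have hz0 : (∑ i, (z i - y i)) = 0 := by exact_mod_cast hsum
    have hzy : z = y := by
      funext i
      have h0 := (Finset.sum_eq_zero_iff_of_nonneg hnn).mp hz0 i (Finset.mem_univ i)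
      omega
    subst hzy
    exact ⟨c, hch⟩
  | succ N ih =>
    intro T n c x y z hch hmem hle hsum
    have hex : ∃ i0, y i0 < z i0 := by
      by_contra hno
      push_neg at hno
      have hz : ∀ i ∈ Finset.univ, z i - y i = 0 := fun i _ => by
        have h1 := Pi.le_def.mp hle i; have h2 := hno i; omega
      rw [Finset.sum_congr rfl hz] at hsum
      simp at hsum
      omega
    obtain ⟨i0, hi0⟩ := hex
    obtain ⟨y', hy'app⟩ : ∃ y' : I → ℤ, ∀ j, y' j = y j + (if j = i0 then 1 else 0) :=
      ⟨fun j => y j + (if j = i0 then 1 else 0), fun j => rfl⟩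
    have hyy' : y ≤ y' := by
      refine Pi.le_def.mpr fun j => ?_
      rw [hy'app j]; split <;> omega
    have hy'z : y' ≤ z := by
      refine Pi.le_def.mpr fun j => ?_
      rw [hy'app j]
      have := Pi.le_def.mp hle j
      split
      · next h => subst h; omega
      · omega
    have hyT : y ∈ T := hmem y le_rfl hle
    have hy'T : y' ∈ T := hmem _ hyy' hy'z
    have hcons : Consecutive T y (y') := by
      refine ⟨hyT, hy'T, ?_, ?_⟩
      · refine lt_of_le_of_ne hyy' ?_
        intro hEq
        have := congrFun hEq i0
        rw [hy'app i0] at this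
        simp at this
      · rintro w hw ⟨h1, h2⟩
        have hle1 := Pi.le_def.mp (le_of_lt h1)
        have hle2 := Pi.le_def.mp (le_of_lt h2)
        have hcases : w = y ∨ w = y' := by
          by_cases hwi : w i0 = y i0
          · left; funext j
            by_cases hj : j = i0
            · subst hj; exact hwi
            · have a1 := hle1 j
              have a2 := hle2 j
              rw [hy'app j, if_neg hj] at a2
              omega
          · right; funext j
            rw [hy'app j]
            by_cases hj : j = i0
            · subst hj
              have a1 := hle1 j
              have a2 := hle2 j
              rw [hy'app j, if_pos rfl] at a2
              rw [if_pos rfl]; omega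
            · have a1 := hle1 j
              have a2 := hle2 j
              rw [hy'app j, if_neg hj] at a2
              rw [if_neg hj]; omega
        rcases hcases with h | h
        · exact absurd h.symm (ne_of_lt h1)
        · exact absurd h (ne_of_lt h2)
    have hch' : SaturatedChain T (n + 1) (Fin.snoc c (y')) x
        (y') := chain_snoc hch hcons
    have hmem' : ∀ w, y' ≤ w → w ≤ z → w ∈ T := fun w hw1 hw2 =>
      hmem w (le_trans hyy' hw1) hw2
    have hsum' : (∑ i, (z i - (y') i)) = (N : ℤ) := by
      have hterm : ∀ i ∈ Finset.univ, z i - (y') i =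
          (z i - y i) - (if i = i0 then 1 else 0) := by
        intro i _; rw [hy'app i]; ring
      rw [Finset.sum_congr rfl hterm, Finset.sum_sub_distrib, hsum,
        Finset.sum_ite_eq' Finset.univ i0 (fun _ => (1:ℤ))]
      simp
    obtain ⟨c', hc'⟩ := ih hch' hmem' hy'z hsum'
    have hlen : n + (N + 1) = n + 1 + N := by omega
    rw [hlen]
    exact ⟨c', hc'⟩

end GoodSemigroup

/-- Lemma 38: additivity of the distance, `d(G∖E) = d(G∖F) + d(F∖E)`. -/
theorem distance_additive {I : Type*} [Fintype I] [Nonempty I]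
    (S E F G : Set (I → ℤ)) (hS : IsGood S)
    (hE : IsIdeal S E) (hF : IsIdeal S F) (hG : IsIdeal S G)
    (hE1 : SatE1 E) (hF1 : SatE1 F) (hG1 : SatE1 G)
    (hE4 : SatE4 E) (hF4 : SatE4 F) (hG4 : SatE4 G)
    (hEF : E ⊆ F) (hFG : F ⊆ G)
    (μE μF μG γE γF : I → ℤ)
    (hμE : IsLeast E μE) (hμF : IsLeast F μF) (hμG : IsLeast G μG)
    (hγE : IsLeast (cond E) γE) (hγF : IsLeast (cond F) γF)
    (dGE dEE dGF dFF dFE : ℕ)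
    (hGE : ∃ c, SaturatedChain G dGE c μG γE)
    (hEE : ∃ c, SaturatedChain E dEE c μE γE)
    (hGF : ∃ c, SaturatedChain G dGF c μG γF)
    (hFF : ∃ c, SaturatedChain F dFF c μF γF)
    (hFE : ∃ c, SaturatedChain F dFE c μF γE) :
    (dGE : ℤ) - (dEE : ℤ) = ((dGF : ℤ) - (dFF : ℤ)) + ((dFE : ℤ) - (dEE : ℤ)) := by
  classical
  have hγEE : γE ∈ E := by
    have h0 : (0 : I → ℤ) ∈ {β : I → ℤ | 0 ≤ β} := Set.mem_setOf.mpr le_rfl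
    simpa using hγE.1 0 h0
  have hγEcondF : γE ∈ cond F := fun f hf => hEF (hγE.1 f hf)
  have hγFle : γF ≤ γE := hγF.2 hγEcondF
  have hmemF : ∀ w, γF ≤ w → w ≤ γE → w ∈ F := by
    intro w h1 _
    have hβ : (w - γF) ∈ {β : I → ℤ | 0 ≤ β} := by
      refine Set.mem_setOf.mpr (Pi.le_def.mpr fun i => ?_)
      have := Pi.le_def.mp h1 i
      simp only [Pi.sub_apply, Pi.zero_apply]
      omega
    have := hγF.1 (w - γF) hβ
    simpa using this
  have hmemG : ∀ w, γF ≤ w → w ≤ γE → w ∈ G := fun w h1 h2 => hFG (hmemF w h1 h2)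
  set N : ℕ := (∑ i, (γE i - γF i)).toNat with hN
  have hsum : (∑ i, (γE i - γF i)) = (N : ℤ) := by
    rw [hN, Int.toNat_of_nonneg]
    exact Finset.sum_nonneg fun i _ => by have := Pi.le_def.mp hγFle i; omega
  obtain ⟨cGF, hcGF⟩ := hGF
  obtain ⟨cFF, hcFF⟩ := hFF
  obtain ⟨cGE, hcGE⟩ := hGE
  obtain ⟨cFE, hcFE⟩ := hFE
  obtain ⟨cG', hcG'⟩ := chain_extend N hcGF hmemG hγFle hsum
  obtain ⟨cF', hcF'⟩ := chain_extend N hcFF hmemF hγFle hsum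
  have hμGG : μG ∈ G := hμG.1
  have hγEG : γE ∈ G := hFG (hEF hγEE)
  have hμFF : μF ∈ F := hμF.1
  have hγEF : γE ∈ F := hEF hγEE
  have e1 : dGE = dGF + N := hG4 μG hμGG γE hγEG dGE (dGF + N) cGE cG' hcGE hcG'
  have e2 : dFE = dFF + N := hF4 μF hμFF γE hγEF dFE (dFF + N) cFE cF' hcFE hcF'
  subst e1 e2
  push_cast
  ring
end

section
/- Let S be a good semigroup. Then every good semigroup ideal E ∈ 𝔊_S satisfies property (E4): for any fixed α, β ∈ E with α ≤ β, any two saturated chains in E from α to β have the same length. -/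
open GoodSemigroup

namespace GoodSemigroupAux

open GoodSemigroup

variable {I : Type*} [Fintype I]

/-- Recursive formulation of saturated chains. -/
def SatChain (E : Set (I → ℤ)) : ℕ → (I → ℤ) → (I → ℤ) → Prop
  | 0, a, b => a = b
  | n + 1, a, b => ∃ x, Consecutive E a x ∧ SatChain E n x b

lemma satChain_le {E : Set (I → ℤ)} :
    ∀ {n : ℕ} {a b : I → ℤ}, SatChain E n a b → a ≤ b := by
  intro n
  induction n with
  | zero => intro a b h; exact le_of_eq h
  | succ n ih =>
    rintro a b ⟨x, hc, ht⟩
    exact le_trans (le_of_lt hc.2.2.1) (ih ht)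

lemma satChain_of_saturatedChain {E : Set (I → ℤ)} :
    ∀ {n : ℕ} {c : Fin (n + 1) → I → ℤ} {a b : I → ℤ},
      SaturatedChain E n c a b → SatChain E n a b := by
  intro n
  induction n with
  | zero =>
    rintro c a b ⟨h0, hl, _⟩
    show a = b
    rw [← h0, ← hl]; rfl
  | succ n ih =>
    rintro c a b ⟨h0, hl, hc⟩
    refine ⟨c 1, ?_, ih (c := c ∘ Fin.succ) ⟨?_, ?_, ?_⟩⟩
    · have := hc 0
      rwa [show (0 : Fin (n+1)).castSucc = 0 from rfl, h0,
        show (0 : Fin (n+1)).succ = 1 from rfl] at this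
    · rfl
    · show c (Fin.last n).succ = b
      rw [Fin.succ_last]; exact hl
    · intro i
      have := hc i.succ
      rwa [← Fin.succ_castSucc] at this
  
/-- Finiteness of boxes. -/
lemma finite_Icc' (p q : I → ℤ) : (Set.Icc p q).Finite := by
  classical
  exact Set.finite_Icc p q

/-- Existence of a least element of a nonempty finite inf-closed set. -/
lemma exists_least {U : Set (I → ℤ)} (hfin : U.Finite) (hne : U.Nonempty)
    (hclosed : ∀ u ∈ U, ∀ v ∈ U, u ⊓ v ∈ U) :
    ∃ z ∈ U, ∀ u ∈ U, z ≤ u := by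
  classical
  obtain ⟨z, hz, hzmin⟩ := hfin.toFinset.exists_minimal (by simpa using hne)
  simp only [Set.Finite.mem_toFinset] at hz
  refine ⟨z, hz, fun u hu => ?_⟩
  have h1 : z ⊓ u ∈ U := hclosed z hz u hu
  have h2 : ¬ (z ⊓ u < z) := fun hlt => hlt.not_ge (hzmin (by simpa using h1) hlt.le)
  have : z ⊓ u = z := (eq_or_lt_of_le (inf_le_left : z ⊓ u ≤ z)).resolve_right h2
  rw [← this]; exact inf_le_right

lemma lt_exists_coord {x e : I → ℤ} (h : x < e) : ∃ i, x i < e i := by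
  obtain ⟨i, hi⟩ := Function.ne_iff.mp (ne_of_lt h)
  exact ⟨i, lt_of_le_of_ne (le_of_lt h i) hi⟩

/-- The diamond (Birkhoff) lemma. -/
lemma diamond {E : Set (I → ℤ)} (hE1 : SatE1 E) (hE2 : SatE2 E)
    {a x y b : I → ℤ} (hb : b ∈ E) (hax : Consecutive E a x) (hay : Consecutive E a y)
    (hxy : x ≠ y) (hxb : x ≤ b) (hyb : y ≤ b) :
    ∃ z ∈ E, z ≤ b ∧ Consecutive E x z ∧ Consecutive E y z := by
  -- the least common upper bound
  set U : Set (I → ℤ) := {u | u ∈ E ∧ x ≤ u ∧ y ≤ u ∧ u ≤ b} with hU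
  have hUfin : U.Finite := (finite_Icc' x b).subset (fun u hu => ⟨hu.2.1, hu.2.2.2⟩)
  have hUne : U.Nonempty := ⟨b, hb, hxb, hyb, le_refl b⟩
  have hUclosed : ∀ u ∈ U, ∀ v ∈ U, u ⊓ v ∈ U := by
    rintro u ⟨hu, hxu, hyu, hub⟩ v ⟨hv, hxv, hyv, hvb⟩
    exact ⟨hE1 u hu v hv, le_inf hxu hxv, le_inf hyu hyv, le_trans inf_le_left hub⟩
  obtain ⟨z, hzU, hzle⟩ := exists_least hUfin hUne hUclosed
  have key : ∀ x' y' : I → ℤ, Consecutive E a x' → Consecutive E a y' → x' ≠ y' →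
      x' ≤ z → y' ≤ z → x' ≤ b → y' ≤ b →
      (∀ u ∈ E, x' ≤ u → y' ≤ u → u ≤ b → z ≤ u) → z ∈ E → z ≤ b →
      Consecutive E x' z := by
    clear hzU hzle hxy hax hay hxb hyb
    intro x y hax hay hxy hxz hyz hxb hyb hzle hzE hzb
    -- x ⊓ y = a
    have hm : x ⊓ y = a := by
      have h1 : a ≤ x ⊓ y := le_inf (le_of_lt hax.2.2.1) (le_of_lt hay.2.2.1)
      rcases eq_or_lt_of_le h1 with h | h
      · exact h.symm
      · exfalso
        have h2 : ¬ (x ⊓ y < x) := fun hlt => hax.2.2.2 _ (hE1 x hax.2.1 y hay.2.1) ⟨h, hlt⟩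
        have h3 : x ⊓ y = x := (eq_or_lt_of_le (inf_le_left : x ⊓ y ≤ x)).resolve_right h2
        have h4 : x ≤ y := by rw [← h3]; exact inf_le_right
        have h5 : ¬ (x < y) := fun hlt => hay.2.2.2 x hax.2.1 ⟨hax.2.2.1, hlt⟩
        exact hxy ((eq_or_lt_of_le h4).resolve_right h5)
    have hxltz : x < z := by
      rcases eq_or_lt_of_le hxz with h | h
      · exfalso
        have h4 : y ≤ x := h ▸ hyz
        have h5 : ¬ (y < x) := fun hlt => hax.2.2.2 y hay.2.1 ⟨hay.2.2.1, hlt⟩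
        exact hxy ((eq_or_lt_of_le h4).resolve_right h5).symm
      · exact h
    refine ⟨hax.2.1, hzE, hxltz, ?_⟩
    rintro e heE ⟨hxe, hez⟩
    -- e ⊓ y = a
    have hey : e ⊓ y = a := by
      have h1 : a ≤ e ⊓ y :=
        le_inf (le_of_lt (lt_trans hax.2.2.1 hxe)) (le_of_lt hay.2.2.1)
      rcases eq_or_lt_of_le h1 with h | h
      · exact h.symm
      · exfalso
        have h2 : ¬ (e ⊓ y < y) := fun hlt => hay.2.2.2 _ (hE1 e heE y hay.2.1) ⟨h, hlt⟩
        have h3 : e ⊓ y = y := (eq_or_lt_of_le (inf_le_right : e ⊓ y ≤ y)).resolve_right h2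
        have h4 : y ≤ e := by rw [← h3]; exact inf_le_left
        have : z ≤ e := hzle e heE (le_of_lt hxe) h4 (le_trans (le_of_lt hez) hzb)
        exact absurd hez (not_lt_of_ge this)
    -- a coordinate where y is strictly larger
    obtain ⟨j, hj⟩ := lt_exists_coord hay.2.2.1
    have hxj : x j = a j := by
      have h1 : min (x j) (y j) = a j := by
        have := congrFun hm j
        simpa [Pi.inf_apply] using this
      rcases le_total (x j) (y j) with h | h
      · rw [min_eq_left h] at h1; exact h1
      · rw [min_eq_right h] at h1; omega
    have hej : e j = a j := by
      have h1 : min (e j) (y j) = a j := by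
        have := congrFun hey j
        simpa [Pi.inf_apply] using this
      rcases le_total (e j) (y j) with h | h
      · rw [min_eq_left h] at h1; exact h1
      · rw [min_eq_right h] at h1; omega
    -- apply (E2) to x and e at j
    obtain ⟨ε, hεE, hεj, hεmin, hεeq⟩ := hE2 x hax.2.1 e heE j (by rw [hxj, hej])
    have hxε : x ≤ ε := by
      intro i
      by_cases hij : i = j
      · subst hij; exact le_of_lt hεj
      · calc x i = min (x i) (e i) := (min_eq_left (le_of_lt hxe i)).symm
          _ ≤ ε i := hεmin i hij
    -- y ≤ ε via the cover property of y
    have hyε : y ≤ ε := by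
      have hwE : ε ⊓ y ∈ E := hE1 ε hεE y hay.2.1
      have hwa : a ≤ ε ⊓ y := le_inf (le_trans (le_of_lt hax.2.2.1) hxε) (le_of_lt hay.2.2.1)
      have hwj : a j < (ε ⊓ y) j := by
        have h1 : a j < ε j := by rw [← hxj]; exact hεj
        simp only [Pi.inf_apply, lt_min_iff]
        exact ⟨h1, hj⟩
      have hwlt : a < ε ⊓ y := lt_of_le_of_ne hwa (fun h => by rw [← h] at hwj; omega)
      have h2 : ¬ (ε ⊓ y < y) := fun hlt => hay.2.2.2 _ hwE ⟨hwlt, hlt⟩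
      have h3 : ε ⊓ y = y := (eq_or_lt_of_le (inf_le_right : ε ⊓ y ≤ y)).resolve_right h2
      rw [← h3]; exact inf_le_left
    -- a coordinate where x < e
    obtain ⟨i0, hi0⟩ := lt_exists_coord hxe
    have hi0j : i0 ≠ j := fun h => by rw [h, hxj, hej] at hi0; omega
    have hεi0 : ε i0 = x i0 := by
      rw [hεeq i0 hi0j (ne_of_lt hi0), min_eq_left (le_of_lt hi0)]
    -- ε ⊓ b is a common upper bound below z, contradiction
    have huU : z ≤ ε ⊓ b :=
      hzle _ (hE1 ε hεE b hb) (le_inf hxε hxb) (le_inf hyε hyb) inf_le_right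
    have : z i0 ≤ x i0 := le_trans (huU i0) (by
      simp only [Pi.inf_apply]
      rw [← hεi0]; exact min_le_left _ _)
    have : e i0 ≤ x i0 := le_trans (le_of_lt hez i0) this
    omega
  obtain ⟨hzE, hxz, hyz, hzb⟩ := hzU
  have hzle' : ∀ u ∈ E, x ≤ u → y ≤ u → u ≤ b → z ≤ u := fun u hu h1 h2 h3 =>
    hzle u ⟨hu, h1, h2, h3⟩
  have hzle'' : ∀ u ∈ E, y ≤ u → x ≤ u → u ≤ b → z ≤ u := fun u hu h1 h2 h3 =>
    hzle u ⟨hu, h2, h1, h3⟩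
  exact ⟨z, hzE, hzb, key x y hax hay hxy hxz hyz hxb hyb hzle' hzE hzb,
    key y x hay hax (Ne.symm hxy) hyz hxz hyb hxb hzle'' hzE hzb⟩

/-- Existence of saturated chains. -/
lemma exists_satChain {E : Set (I → ℤ)} :
    ∀ N : ℕ, ∀ p q : I → ℤ, p ∈ E → q ∈ E → p ≤ q →
      (∑ i, (q i - p i).toNat) ≤ N → ∃ n, SatChain E n p q := by
  intro N
  induction N with
  | zero =>
    intro p q hp hq hpq hN
    have : p = q := by
      funext i
      have hs : (q i - p i).toNat ≤ ∑ i, (q i - p i).toNat := by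
        exact Finset.single_le_sum (f := fun i => (q i - p i).toNat)
          (fun i _ => Nat.zero_le _) (Finset.mem_univ i)
      have h2 : p i ≤ q i := hpq i
      omega
    exact ⟨0, this⟩
  | succ N ih =>
    intro p q hp hq hpq hN
    by_cases hpq' : p = q
    · exact ⟨0, hpq'⟩
    · -- pick a minimal element of E strictly above p, below q
      classical
      set F : Set (I → ℤ) := {e | e ∈ E ∧ p < e ∧ e ≤ q} with hF
      have hFfin : F.Finite := (finite_Icc' p q).subset
        (fun u hu => ⟨le_of_lt hu.2.1, hu.2.2⟩)
      have hFne : F.Nonempty := ⟨q, hq, lt_of_le_of_ne hpq hpq', le_refl q⟩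
      obtain ⟨e, he, hemin⟩ := hFfin.toFinset.exists_minimal (by simpa using hFne)
      simp only [Set.Finite.mem_toFinset] at he
      obtain ⟨heE, hpe, heq⟩ := he
      have hcons : Consecutive E p e := by
        refine ⟨hp, heE, hpe, ?_⟩
        rintro c hc ⟨h1, h2⟩
        have hcF : c ∈ hFfin.toFinset := by
          rw [Set.Finite.mem_toFinset]
          exact ⟨hc, h1, le_trans (le_of_lt h2) heq⟩
        exact h2.not_ge (hemin hcF h2.le)
      have hmeas : (∑ i, (q i - e i).toNat) ≤ N := by
        have hlt : (∑ i, (q i - e i).toNat) < ∑ i, (q i - p i).toNat := by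
          obtain ⟨i0, hi0⟩ := lt_exists_coord hpe
          refine Finset.sum_lt_sum (fun i _ => ?_) ⟨i0, Finset.mem_univ i0, ?_⟩
          · have h1 : p i ≤ e i := le_of_lt hpe i
            have h2 : e i ≤ q i := heq i
            show (q i - e i).toNat ≤ (q i - p i).toNat
            omega
          · have h2 : e i0 ≤ q i0 := heq i0
            show (q i0 - e i0).toNat < (q i0 - p i0).toNat
            omega
        omega
      obtain ⟨n, hn⟩ := ih e q heE hq heq hmeas
      exact ⟨n + 1, e, hcons, hn⟩

/-- Uniqueness of chain lengths. -/
lemma satChain_unique {E : Set (I → ℤ)} (hE1 : SatE1 E) (hE2 : SatE2 E) :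
    ∀ n : ℕ, ∀ a b : I → ℤ, a ∈ E → b ∈ E → ∀ m : ℕ,
      SatChain E n a b → SatChain E m a b → n = m := by
  intro n
  induction n using Nat.strong_induction_on with
  | _ n ih =>
    intro a b ha hb m hn hm
    match n, hn with
    | 0, hn =>
      -- a = b
      match m, hm with
      | 0, _ => rfl
      | m' + 1, ⟨y1, hcons, htail⟩ =>
        exfalso
        have h1 : y1 ≤ b := satChain_le htail
        have h2 : a < y1 := hcons.2.2.1
        rw [hn] at h2
        exact absurd (lt_of_lt_of_le h2 h1) (lt_irrefl b)
    | n' + 1, ⟨x1, hconsx, htailx⟩ =>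
      match m, hm with
      | 0, hm =>
        exfalso
        have h1 : x1 ≤ b := satChain_le htailx
        have h2 : a < x1 := hconsx.2.2.1
        rw [hm] at h2
        exact absurd (lt_of_lt_of_le h2 h1) (lt_irrefl b)
      | m' + 1, ⟨y1, hconsy, htaily⟩ =>
        by_cases hxy : x1 = y1
        · subst hxy
          have := ih n' (Nat.lt_succ_self n') x1 b hconsx.2.1 hb m' htailx htaily
          omega
        · -- diamond
          obtain ⟨z, hzE, hzb, hconsxz, hconsyz⟩ := diamond hE1 hE2 hb hconsx hconsy hxy
            (satChain_le htailx) (satChain_le htaily)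
          obtain ⟨k, hk⟩ := exists_satChain (∑ i, (b i - z i).toNat) z b hzE hb hzb (le_refl _)
          have h1 : SatChain E (k + 1) x1 b := ⟨z, hconsxz, hk⟩
          have h2 : n' = k + 1 := ih n' (Nat.lt_succ_self n') x1 b hconsx.2.1 hb (k+1) htailx h1
          have h3 : SatChain E n' y1 b := by rw [h2]; exact ⟨z, hconsyz, hk⟩
          have h4 : n' = m' := ih n' (Nat.lt_succ_self n') y1 b hconsy.2.1 hb m' h3 htaily
          omega

end GoodSemigroupAux

open GoodSemigroup
/-- Proposition 89: every good semigroup ideal satisfies property (E4). -/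
theorem goodIdeal_satE4 {I : Type*} [Fintype I] [Nonempty I]
    (S E : Set (I → ℤ)) (hS : IsGood S) (hE : IsGoodIdeal S E) :
    SatE4 E := by
  intro a ha b hb n m c c' hc hc'
  exact GoodSemigroupAux.satChain_unique hE.2.1 hE.2.2 n a b ha hb m
    (GoodSemigroupAux.satChain_of_saturatedChain hc)
    (GoodSemigroupAux.satChain_of_saturatedChain hc')
end

section
/- Let S be a good semigroup. Then K^0_S is a semigroup ideal of S satisfying property (E1), with minimum μ^{K^0_S} = 0 and conductor γ^{K^0_S} = γ. -/
open GoodSemigroup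
private def unitv {I : Type*} [DecidableEq I] (i : I) : I → ℤ := fun k => if k = i then 1 else 0

private lemma unitv_same {I : Type*} [DecidableEq I] (i : I) : unitv i i = 1 := by
  simp [unitv]

private lemma unitv_ne {I : Type*} [DecidableEq I] {i k : I} (h : k ≠ i) : unitv i k = 0 := by
  simp [unitv, h]

private lemma mem_of_conductor {I : Type*} {S : Set (I → ℤ)} {γ : I → ℤ}
    (hγC : γ ∈ cond S) {w : I → ℤ} (hw : ∀ k, γ k ≤ w k) : w ∈ S := by
  have h0 : (0 : I → ℤ) ≤ w - γ := fun k => by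
    have h : (0:I→ℤ) k ≤ (w - γ) k ↔ 0 ≤ w k - γ k := by
      simp [Pi.sub_apply]
    rw [h]; have := hw k; omega
  have h := hγC (w - γ) h0
  simpa using h

private lemma fill_aux {I : Type*} [Fintype I] [DecidableEq I] {S : Set (I → ℤ)}
    (hE1 : SatE1 S) (hE2 : SatE2 S)
    {γ : I → ℤ} (hγC : γ ∈ cond S) {i : I} {v : I → ℤ}
    (hvγ : ∀ j, j ≠ i → γ j ≤ v j) (hvi : γ i - 1 ≤ v i) :
    ∀ n : ℕ, ∀ y : I → ℤ, y ∈ S → (∀ k, y k ≤ v k) → y i = v i →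
      (∀ j, j ≠ i → γ j ≤ y j) → (∑ j, (v j - y j)) ≤ (n : ℤ) → v ∈ S := by
  intro n
  induction n with
  | zero =>
    intro y hy hyv hyi hyγ hsum
    have hnn : ∀ j ∈ Finset.univ, (0:ℤ) ≤ v j - y j := fun j _ => by
      have := hyv j; omega
    have hz : (∑ j, (v j - y j)) = 0 :=
      le_antisymm (by exact_mod_cast hsum) (Finset.sum_nonneg hnn)
    have hall := (Finset.sum_eq_zero_iff_of_nonneg hnn).1 hz
    have heq : y = v := funext fun j => by
      have h := hall j (Finset.mem_univ j); omega
    exact heq ▸ hy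
  | succ n ih =>
    intro y hy hyv hyi hyγ hsum
    by_cases hyveq : y = v
    · exact hyveq ▸ hy
    · obtain ⟨j, hj⟩ : ∃ j, y j < v j := by
        by_contra h; push_neg at h
        exact hyveq (funext fun k => le_antisymm (hyv k) (h k))
      have hji : j ≠ i := fun h => by rw [h, hyi] at hj; omega
      have hbS : y + unitv i ∈ S := by
        refine mem_of_conductor hγC fun k => ?_
        have h : (y + unitv i) k = y k + unitv i k := rfl
        rw [h]
        by_cases hk : k = i
        · subst hk; rw [unitv_same]; omega
        · rw [unitv_ne hk]; have := hyγ k hk; omega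
      have huS : v + unitv i ∈ S := by
        refine mem_of_conductor hγC fun k => ?_
        have h : (v + unitv i) k = v k + unitv i k := rfl
        rw [h]
        by_cases hk : k = i
        · subst hk; rw [unitv_same]; omega
        · rw [unitv_ne hk]; have := hvγ k hk; omega
      have hyjeq : y j = (y + unitv i) j := by
        have h : (y + unitv i) j = y j + unitv i j := rfl
        rw [h, unitv_ne hji]; ring
      obtain ⟨ε, hεS, hεj, hεge, hεeq⟩ := hE2 y hy (y + unitv i) hbS j hyjeq
      have hεi : ε i = y i := by
        have hne : y i ≠ (y + unitv i) i := by
          have h : (y + unitv i) i = y i + unitv i i := rfl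
          rw [h, unitv_same]; omega
        have h2 := hεeq i (Ne.symm hji) hne
        have h3 : (y + unitv i) i = y i + 1 := by
          have h : (y + unitv i) i = y i + unitv i i := rfl
          rw [h, unitv_same]
        rw [h3] at h2; omega
      have hεy : ∀ k, y k ≤ ε k := fun k => by
        by_cases hk : k = j
        · subst hk; omega
        · have h1 := hεge k hk
          have h2 : (y + unitv i) k = y k + unitv i k := rfl
          rw [h2] at h1
          have h3 : (0:ℤ) ≤ unitv i k := by
            by_cases hki : k = i
            · subst hki; rw [unitv_same]; omega
            · rw [unitv_ne hki]
          omega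
      have hy'S : ε ⊓ (v + unitv i) ∈ S := hE1 ε hεS _ huS
      set y' : I → ℤ := ε ⊓ (v + unitv i) with hy'def
      have hy'app : ∀ k, y' k = min (ε k) (v k + unitv i k) := fun k => rfl
      have hy'i : y' i = v i := by
        rw [hy'app, unitv_same, hεi, hyi]; omega
      have hy'v : ∀ k, y' k ≤ v k := fun k => by
        by_cases hk : k = i
        · subst hk; rw [hy'i]
        · rw [hy'app, unitv_ne hk]; omega
      have hy'ge : ∀ k, y k ≤ y' k := fun k => by
        rw [hy'app]
        have h1 := hεy k
        have h2 := hyv k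
        have h3 : (0:ℤ) ≤ unitv i k := by
          by_cases hki : k = i
          · subst hki; rw [unitv_same]; omega
          · rw [unitv_ne hki]
        omega
      have hy'j : y j + 1 ≤ y' j := by
        rw [hy'app, unitv_ne hji]
        omega
      refine ih y' hy'S hy'v hy'i (fun k hk => le_trans (hyγ k hk) (hy'ge k)) ?_
      have hsplit : (∑ k, (v k - y' k)) = (∑ k, (v k - y k)) - (∑ k, (y' k - y k)) := by
        rw [← Finset.sum_sub_distrib]; congr 1; funext k; ring
      have hone : (1:ℤ) ≤ ∑ k, (y' k - y k) := by
        have h := Finset.single_le_sum (f := fun k => y' k - y k)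
          (fun k _ => by show (0:ℤ) ≤ y' k - y k; have := hy'ge k; omega) (Finset.mem_univ j)
        omega
      rw [hsplit]
      push_cast at hsum ⊢
      omega

/-- If `S` contains a point of `Δ(γ - 1)`, contradiction with minimality of `γ`. -/
private lemma no_delta_tau {I : Type*} [Fintype I] [DecidableEq I] {S : Set (I → ℤ)}
    (hE1 : SatE1 S) (hE2 : SatE2 S) {γ : I → ℤ} (hγ : IsLeast (cond S) γ)
    {x : I → ℤ} {i : I} (hx : x ∈ S) (hxi : x i = γ i - 1)
    (hxk : ∀ k, k ≠ i → γ k ≤ x k) : False := by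
  have hγC : γ ∈ cond S := hγ.1
  have hC : γ - unitv i ∈ cond S := by
    intro f hf
    have hf' : ∀ k, (0:ℤ) ≤ f k := fun k => hf k
    have happ : ∀ k, (γ - unitv i + f) k = γ k - unitv i k + f k := fun k => rfl
    by_cases hfi : 1 ≤ f i
    · refine mem_of_conductor hγC fun k => ?_
      rw [happ]
      by_cases hk : k = i
      · subst hk; rw [unitv_same]; omega
      · rw [unitv_ne hk]; have := hf' k; omega
    · have hfi0 : f i = 0 := by have := hf' i; omega
      set w : I → ℤ := γ - unitv i + f with hwdef
      have hw : ∀ k, w k = γ k - unitv i k + f k := fun k => rfl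
      have hwi : w i = γ i - 1 := by rw [hw, unitv_same, hfi0]; ring
      have hwk : ∀ k, k ≠ i → γ k ≤ w k := fun k hk => by
        rw [hw, unitv_ne hk]; have := hf' k; omega
      have hwuS : w + unitv i ∈ S := by
        refine mem_of_conductor hγC fun k => ?_
        have h : (w + unitv i) k = w k + unitv i k := rfl
        rw [h]
        by_cases hk : k = i
        · subst hk; rw [hwi, unitv_same]; omega
        · rw [unitv_ne hk]; have := hwk k hk; omega
      have hyS : x ⊓ (w + unitv i) ∈ S := hE1 x hx _ hwuS
      set y : I → ℤ := x ⊓ (w + unitv i) with hydef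
      have hy : ∀ k, y k = min (x k) (w k + unitv i k) := fun k => rfl
      have hyi : y i = w i := by rw [hy, unitv_same, hxi, hwi]; omega
      have hyv : ∀ k, y k ≤ w k := fun k => by
        by_cases hk : k = i
        · subst hk; rw [hyi]
        · rw [hy, unitv_ne hk]; omega
      have hyγ : ∀ k, k ≠ i → γ k ≤ y k := fun k hk => by
        rw [hy, unitv_ne hk]
        have h1 := hxk k hk
        have h2 := hwk k hk
        omega
      refine fill_aux hE1 hE2 hγC hwk (by rw [hwi]) (∑ k, (w k - y k)).toNat
        y hyS hyv hyi hyγ ?_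
      exact Int.self_le_toNat _
  have hle : γ ≤ γ - unitv i := hγ.2 hC
  have : γ i ≤ (γ - unitv i) i := hle i
  have h2 : (γ - unitv i) i = γ i - unitv i i := rfl
  rw [h2, unitv_same] at this
  omega

private lemma mem_K0 {I : Type*} {S : Set (I → ℤ)} {τ a : I → ℤ}
    (h : ∀ x ∈ S, ∀ i : I, x i = τ i - a i → ∃ k, k ≠ i ∧ x k ≤ τ k - a k) :
    a ∈ K0 S τ := by
  show delta (τ - a) ∩ S = ∅
  rw [Set.eq_empty_iff_forall_notMem]
  rintro x ⟨hxd, hxS⟩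
  rw [delta, Set.mem_iUnion] at hxd
  obtain ⟨i, hi⟩ := hxd
  have h1 : x i = (τ - a) i := hi.1 i rfl
  have h1' : x i = τ i - a i := by rwa [Pi.sub_apply] at h1
  obtain ⟨k, hk, hle⟩ := h x hxS i h1'
  have h2 : (τ - a) k < x k := hi.2 k (by simpa using hk)
  rw [Pi.sub_apply] at h2
  omega

private lemma not_mem_K0 {I : Type*} {S : Set (I → ℤ)} {τ a x : I → ℤ} {i : I}
    (hxS : x ∈ S) (h1 : x i = τ i - a i) (h2 : ∀ k, k ≠ i → τ k - a k < x k) :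
    a ∉ K0 S τ := by
  intro hmem
  have hx : x ∈ delta (τ - a) ∩ S := by
    refine ⟨?_, hxS⟩
    rw [delta, Set.mem_iUnion]
    refine ⟨i, fun j hj => ?_, fun k hk => ?_⟩
    · have : j = i := hj
      subst this; rw [Pi.sub_apply]; exact h1
    · have hk' : k ≠ i := by simpa using hk
      rw [Pi.sub_apply]; exact h2 k hk'
  rw [show delta (τ - a) ∩ S = ∅ from hmem] at hx
  exact hx

private lemma mem_K0_elim {I : Type*} {S : Set (I → ℤ)} {τ a : I → ℤ}
    (ha : a ∈ K0 S τ) : ∀ x ∈ S, ∀ i : I, x i = τ i - a i →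
      ∃ k, k ≠ i ∧ x k ≤ τ k - a k := by
  intro x hx i hxi
  by_contra h
  push_neg at h
  exact not_mem_K0 hx hxi (fun k hk => h k hk) ha

/-- Lemma 47: `K⁰_S` is a semigroup ideal of `S` satisfying (E1),
with minimum `0` and conductor `γ`. -/
theorem K0_isIdeal_min_conductor {I : Type*} [Fintype I] [Nonempty I]
    (S : Set (I → ℤ)) (hS : IsGood S) (γ : I → ℤ) (hγ : IsLeast (cond S) γ) :
    IsIdeal S (K0 S (γ - 1)) ∧ SatE1 (K0 S (γ - 1)) ∧
    IsLeast (K0 S (γ - 1)) 0 ∧ IsLeast (cond (K0 S (γ - 1))) γ := by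
  classical
  have h0S : (0 : I → ℤ) ∈ S := hS.1
  have haddS : ∀ a ∈ S, ∀ b ∈ S, a + b ∈ S := hS.2.1
  have hposS : ∀ a ∈ S, 0 ≤ a := hS.2.2.1
  have hE1S : SatE1 S := hS.2.2.2.2.1
  have hE2S : SatE2 S := hS.2.2.2.2.2
  have hγC : γ ∈ cond S := hγ.1
  have hτ : ∀ k : I, (γ - 1 : I → ℤ) k = γ k - 1 := fun k => by
    simp [Pi.sub_apply]
  -- 0 ∈ K0
  have hzero : (0 : I → ℤ) ∈ K0 S (γ - 1) := by
    refine mem_K0 fun x hx i hxi => ?_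
    by_contra h
    push_neg at h
    refine no_delta_tau hE1S hE2S hγ (i := i) hx ?_ fun k hk => ?_
    · rw [hxi, hτ]; simp
    · have := h k hk
      rw [hτ] at this; simp at this; omega
  -- K0 is bounded below by 0
  have hlb : ∀ a ∈ K0 S (γ - 1), (0 : I → ℤ) ≤ a := by
    intro a ha k
    show (0:ℤ) ≤ a k
    by_contra hneg
    push_neg at hneg
    set x : I → ℤ := fun m => if m = k then γ k - 1 - a k
      else max (γ m - 1 - a m) (γ m - 1) + 1 with hxdef
    have hxS : x ∈ S := by
      refine mem_of_conductor hγC fun m => ?_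
      by_cases hm : m = k
      · subst hm; simp only [hxdef, if_pos rfl]; omega
      · simp only [hxdef, if_neg hm]; omega
    refine not_mem_K0 (τ := γ - 1) hxS (i := k) ?_ (fun m hm => ?_) ha
    · rw [hτ]; simp only [hxdef, if_pos rfl]
    · rw [hτ]; simp only [hxdef, if_neg hm]; omega
  -- K0 + S ⊆ K0
  have hclosed : ∀ a ∈ K0 S (γ - 1), ∀ s ∈ S, a + s ∈ K0 S (γ - 1) := by
    intro a ha s hs
    refine mem_K0 fun x hx i hxi => ?_
    have hxs : x + s ∈ S := haddS x hx s hs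
    obtain ⟨k, hk, hle⟩ := mem_K0_elim ha (x + s) hxs i (by
      have h1 : (x + s) i = x i + s i := rfl
      have h2 : (a + s) i = a i + s i := rfl
      rw [h2] at hxi
      omega)
    refine ⟨k, hk, ?_⟩
    have h1 : (x + s) k = x k + s k := rfl
    have h2 : (a + s) k = a k + s k := rfl
    rw [h1] at hle; rw [h2]
    omega
  -- SatE1
  have hE1K : SatE1 (K0 S (γ - 1)) := by
    intro a ha b hb
    refine mem_K0 fun x hx i hxi => ?_
    have hmin : ∀ m, (a ⊓ b) m = min (a m) (b m) := fun m => rfl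
    rw [hmin] at hxi
    by_cases hab : a i ≤ b i
    · obtain ⟨k, hk, hle⟩ := mem_K0_elim ha x hx i (by omega)
      exact ⟨k, hk, by rw [hmin]; omega⟩
    · obtain ⟨k, hk, hle⟩ := mem_K0_elim hb x hx i (by omega)
      exact ⟨k, hk, by rw [hmin]; omega⟩
  -- γ ∈ cond K0
  have hγK : γ ∈ cond (K0 S (γ - 1)) := by
    intro f hf
    have hf' : ∀ k, (0:ℤ) ≤ f k := fun k => hf k
    refine mem_K0 fun x hx i hxi => ?_
    exfalso
    have hxpos : (0:ℤ) ≤ x i := hposS x hx i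
    have h2 : (γ + f) i = γ i + f i := rfl
    rw [hτ, h2] at hxi
    have := hf' i
    omega
  -- γ is a lower bound of cond K0
  have hγlb : ∀ α ∈ cond (K0 S (γ - 1)), γ ≤ α := by
    intro α hα j
    show γ j ≤ α j
    by_contra h
    push_neg at h
    set β : I → ℤ := fun m => if m = j then γ m - 1 - α m else max (γ m - α m) 0
      with hβdef
    have hβ0 : (0 : I → ℤ) ≤ β := fun m => by
      show (0:ℤ) ≤ β m
      by_cases hm : m = j
      · subst hm; simp only [hβdef, if_pos rfl]; omega
      · simp only [hβdef, if_neg hm]; omega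
    have hmem : α + β ∈ K0 S (γ - 1) := hα β hβ0
    obtain ⟨k, hk, hle⟩ := mem_K0_elim hmem 0 h0S j (by
      have h1 : (0 : I → ℤ) j = 0 := rfl
      have h2 : (α + β) j = α j + β j := rfl
      rw [h1, hτ, h2]
      simp only [hβdef, if_pos rfl]
      ring)
    have h1 : (0 : I → ℤ) k = 0 := rfl
    have h2 : (α + β) k = α k + β k := rfl
    rw [h1, hτ, h2] at hle
    simp only [hβdef, if_neg hk] at hle
    omega
  have hγS : γ ∈ S := by simpa using hγC 0 (show (0:I→ℤ) ≤ 0 from le_refl _)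
  refine ⟨⟨⟨0, hzero⟩, hclosed, ⟨γ, hγS, fun a ha => ?_⟩⟩, hE1K, ⟨hzero, hlb⟩, hγK, hγlb⟩
  have := hγC a (hlb a ha)
  exact this
end

section
/- Let S be a good semigroup. Then: (a) Δ^{K^0_S}(τ) = ∅; (b) for any semigroup ideal E of S, K^0_S − E = {α ∈ ℤ^I | Δ^E(τ − α) = ∅}. -/
open GoodSemigroup
/-- Lemma 48: (a) `Δ^{K⁰_S}(τ) = ∅`; (b) `K⁰_S − E = {α | Δ^E(τ − α) = ∅}` for any
semigroup ideal `E` of `S`. -/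
theorem K0_delta_and_sub {I : Type*} [Fintype I] [Nonempty I]
    (S : Set (I → ℤ)) (hS : IsGood S) (γ : I → ℤ) (hγ : IsLeast (cond S) γ) :
    (delta (γ - 1) ∩ K0 S (γ - 1) = ∅) ∧
    (∀ E : Set (I → ℤ), IsIdeal S E →
      sub (K0 S (γ - 1)) E = {α : I → ℤ | delta (γ - 1 - α) ∩ E = ∅}) := by
  obtain ⟨h0, hadd, -⟩ := hS
  have hmem : ∀ (a b : I → ℤ), b ∈ delta a ↔
      ∃ i, b i = a i ∧ ∀ k, k ≠ i → a k < b k := by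
    intro a b
    simp only [delta, deltaJ, Set.mem_iUnion, Set.mem_setOf_eq,
      Set.mem_singleton_iff, forall_eq]
  refine ⟨?_, ?_⟩
  · rw [Set.eq_empty_iff_forall_notMem]
    rintro β ⟨hβd, hβK⟩
    obtain ⟨i, hieq, hilt⟩ := (hmem _ _).mp hβd
    have h0mem : (0 : I → ℤ) ∈ delta (γ - 1 - β) ∩ S := by
      refine ⟨(hmem _ _).mpr ⟨i, ?_, fun k hk => ?_⟩, h0⟩
      · simp only [Pi.sub_apply, Pi.zero_apply, Pi.one_apply] at hieq ⊢
        omega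
      · have := hilt k hk
        simp only [Pi.sub_apply, Pi.zero_apply, Pi.one_apply] at this ⊢
        omega
    rw [hβK] at h0mem
    exact h0mem
  · intro E hE
    obtain ⟨hEne, hEadd, -⟩ := hE
    ext α
    simp only [sub, Set.mem_setOf_eq]
    constructor
    · intro h
      rw [Set.eq_empty_iff_forall_notMem]
      rintro f ⟨hfd, hfE⟩
      obtain ⟨i, hieq, hilt⟩ := (hmem _ _).mp hfd
      have hK : delta (γ - 1 - (α + f)) ∩ S = ∅ := h f hfE
      have h0mem : (0 : I → ℤ) ∈ delta (γ - 1 - (α + f)) ∩ S := by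
        refine ⟨(hmem _ _).mpr ⟨i, ?_, fun k hk => ?_⟩, h0⟩
        · have := hieq
          simp only [Pi.sub_apply, Pi.add_apply, Pi.zero_apply, Pi.one_apply] at this ⊢
          omega
        · have := hilt k hk
          simp only [Pi.sub_apply, Pi.add_apply, Pi.zero_apply, Pi.one_apply] at this ⊢
          omega
      rw [hK] at h0mem
      exact h0mem
    · intro h f hf
      show delta (γ - 1 - (α + f)) ∩ S = ∅
      rw [Set.eq_empty_iff_forall_notMem]
      rintro s ⟨hsd, hsS⟩
      obtain ⟨i, hieq, hilt⟩ := (hmem _ _).mp hsd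
      have hmem2 : f + s ∈ delta (γ - 1 - α) ∩ E := by
        refine ⟨(hmem _ _).mpr ⟨i, ?_, fun k hk => ?_⟩, hEadd f hf s hsS⟩
        · have := hieq
          simp only [Pi.sub_apply, Pi.add_apply, Pi.one_apply] at this ⊢
          omega
        · have := hilt k hk
          simp only [Pi.sub_apply, Pi.add_apply, Pi.one_apply] at this ⊢
          omega
      rw [h] at hmem2
      exact hmem2
end

section
/- Let S be a good semigroup. Then K^0_S − E ∈ 𝔊_S for every E ∈ 𝔊_S. In particular (taking E = S), K^0_S ∈ 𝔊_S. -/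
open GoodSemigroup



section AuxK

variable {I : Type*}

lemma mem_delta_iff {α e : I → ℤ} :
    e ∈ delta α ↔ ∃ i, e i = α i ∧ ∀ l, l ≠ i → α l < e l := by
  constructor
  · intro h
    rcases Set.mem_iUnion.1 h with ⟨i, hi⟩
    exact ⟨i, hi.1 i rfl, fun l hl => hi.2 l hl⟩
  · rintro ⟨i, h1, h2⟩
    refine Set.mem_iUnion.2 ⟨i, ⟨fun l hl => ?_, fun l hl => h2 l hl⟩⟩
    have hl' : l = i := hl
    rw [hl']; exact h1

lemma mem_delta_sub {τ x e : I → ℤ} :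
    e ∈ delta (τ - x) ↔ ∃ i, e i = τ i - x i ∧ ∀ l, l ≠ i → τ l - x l < e l := by
  simp [mem_delta_iff, Pi.sub_apply]

end AuxK

section KEmain

variable {I : Type*}

theorem KEgood [Fintype I] (S : Set (I → ℤ)) (hS : IsGood S) (γ : I → ℤ)
    (hγ : IsLeast (cond S) γ) (E : Set (I → ℤ)) (hE : IsGoodIdeal S E) :
    IsGoodIdeal S {x : I → ℤ | ∀ e ∈ E, e ∉ delta (γ - 1 - x)} := by
  classical
  obtain ⟨hzero, hadd, hnonneg, _, hSE1, hSE2⟩ := hS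
  obtain ⟨⟨⟨e0, he0⟩, hES, ⟨α0, hα0S, hα0⟩⟩, hEE1, hEE2⟩ := hE
  set τ : I → ℤ := γ - 1 with hτdef
  have hτi : ∀ i, τ i = γ i - 1 := fun i => by simp [hτdef]
  set K : Set (I → ℤ) := {x : I → ℤ | ∀ e ∈ E, e ∉ delta (τ - x)} with hKdef
  have hmemK : ∀ x : I → ℤ, x ∈ K ↔ ∀ e ∈ E, e ∉ delta (τ - x) := fun x => Iff.rfl
  have hγmem : ∀ ν : I → ℤ, 0 ≤ ν → γ + ν ∈ S := fun ν hν => hγ.1 ν hν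
  have hγS : γ ∈ S := by simpa using hγmem 0 le_rfl
  have hγ0 : ∀ i, 0 ≤ γ i := fun i => hnonneg γ hγS i
  have hElb : ∀ e ∈ E, ∀ l, -α0 l ≤ e l := by
    intro e he l
    have h := hnonneg _ (hα0 e he) l
    simp only [Pi.add_apply, Pi.zero_apply] at h
    linarith
  -- (1) K is nonempty
  have hne : (γ + α0) ∈ K := by
    intro e he hdel
    rcases mem_delta_sub.1 hdel with ⟨i, hi, -⟩
    have h1 : -α0 i ≤ e i := hElb e he i
    have h2 : τ i - (γ + α0) i = -α0 i - 1 := by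
      simp [hτi i, Pi.add_apply]; ring
    rw [h2] at hi; linarith
  -- (2) stability under S
  have hstab : ∀ x ∈ K, ∀ s ∈ S, x + s ∈ K := by
    intro x hx s hs e he hdel
    rcases mem_delta_sub.1 hdel with ⟨i, hi, hl⟩
    refine hx (e + s) (hES e he s hs) (mem_delta_sub.2 ⟨i, ?_, ?_⟩)
    · simp only [Pi.add_apply]
      have : τ i - x i - s i = e i := by
        rw [hi]; simp [Pi.add_apply]; ring
      linarith [this]
    · intro l hl'
      have := hl l hl'
      simp only [Pi.add_apply] at this ⊢
      linarith
  -- lower bound on K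
  have hKlb : ∀ x ∈ K, ∀ i, -(e0 i) ≤ x i := by
    intro x hx i
    by_contra hcon
    push_neg at hcon
    set ν : I → ℤ := fun l =>
      if l = i then τ i - x i - e0 i - γ i else max (τ l - x l - e0 l - γ l + 1) 0 with hν
    have hν0 : (0 : I → ℤ) ≤ ν := by
      intro l
      by_cases h : l = i
      · simp only [hν, h, if_pos, Pi.zero_apply]
        have := hτi i; linarith
      · simp only [hν, if_neg h, Pi.zero_apply]
        exact le_max_right _ _
    have hmem : e0 + (γ + ν) ∈ E := hES e0 he0 _ (hγmem ν hν0)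
    refine hx _ hmem (mem_delta_sub.2 ⟨i, ?_, ?_⟩)
    · have hνi : ν i = τ i - x i - e0 i - γ i := by simp [hν]
      simp only [Pi.add_apply, hνi]; ring
    · intro l hl
      simp only [Pi.add_apply, hν, if_neg hl]
      have := le_max_left (τ l - x l - e0 l - γ l + 1) 0
      linarith
  -- (3) bounded: α + K ⊆ S
  have hbound : ∃ α ∈ S, ∀ x ∈ K, α + x ∈ S := by
    refine ⟨γ + (fun l => max (e0 l) 0), hγmem _ (fun l => le_max_right _ _), ?_⟩
    intro x hx
    have : γ + (fun l => max (e0 l) 0) + x = γ + ((fun l => max (e0 l) 0) + x) := by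
      rw [add_assoc]
    rw [this]
    refine hγmem _ ?_
    intro l
    simp only [Pi.add_apply, Pi.zero_apply]
    have h1 := hKlb x hx l
    have h2 := le_max_left (e0 l) 0
    linarith
  -- (4) E1
  have hKE1 : SatE1 K := by
    intro x hx y hy e he hdel
    rcases mem_delta_sub.1 hdel with ⟨i, hi, hl⟩
    rcases le_total (x i) (y i) with h | h
    · refine hx e he (mem_delta_sub.2 ⟨i, ?_, ?_⟩)
      · rw [hi]
        have : (x ⊓ y) i = x i := by
          simp only [Pi.inf_apply]; exact inf_eq_left.2 h
        rw [this]
      · intro l hl'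
        have h1 := hl l hl'
        have h2 : (x ⊓ y) l ≤ x l := by simp only [Pi.inf_apply]; exact inf_le_left
        linarith
    · refine hy e he (mem_delta_sub.2 ⟨i, ?_, ?_⟩)
      · rw [hi]
        have : (x ⊓ y) i = y i := by
          simp only [Pi.inf_apply]; exact inf_eq_right.2 h
        rw [this]
      · intro l hl'
        have h1 := hl l hl'
        have h2 : (x ⊓ y) l ≤ y l := by simp only [Pi.inf_apply]; exact inf_le_right
        linarith
  -- (5) E2
  have hKE2 : SatE2 K := by
    intro a ha b hb j hab
    set ζ : I → ℤ := fun i => τ i - min (a i) (b i) with hζdef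
    have hTMζ : τ - a ⊓ b = ζ := by
      funext l
      simp [hζdef, Pi.sub_apply, Pi.inf_apply]
    have hmK : a ⊓ b ∈ K := hKE1 a ha b hb
    have hEXm : ∀ e ∈ E, ∀ i, e i = ζ i → (∀ l, l ≠ i → ζ l < e l) → False := by
      intro e he i h1 h2
      refine hmK e he ?_
      rw [hTMζ]
      exact mem_delta_iff.2 ⟨i, h1, h2⟩
    have hEX2 : ∀ e ∈ E, ∀ i, a i ≠ b i → e i = ζ i → e j = ζ j →
        (∀ l, l ≠ i → l ≠ j → ζ l < e l) → False := by
      intro e he i hib h1 hj h2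
      rcases lt_or_gt_of_ne hib with hlt | hlt
      · -- a i < b i : contradict b ∈ K
        refine hb e he (mem_delta_sub.2 ⟨j, ?_, ?_⟩)
        · rw [hj, hζdef]
          simp only
          rw [hab, min_self]
        · intro l hl
          by_cases hli : l = i
          · subst hli
            rw [h1, hζdef]
            simp only
            have : min (a l) (b l) = a l := min_eq_left hlt.le
            rw [this]; linarith
          · have h3 := h2 l hli hl
            have h4 : τ l - b l ≤ ζ l := by
              rw [hζdef]; simp only
              have : min (a l) (b l) ≤ b l := min_le_right _ _
              linarith
            linarith
      · -- b i < a i : contradict a ∈ K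
        refine ha e he (mem_delta_sub.2 ⟨j, ?_, ?_⟩)
        · rw [hj, hζdef]
          simp only
          rw [hab, min_self]
        · intro l hl
          by_cases hli : l = i
          · subst hli
            rw [h1, hζdef]
            simp only
            have : min (a l) (b l) = b l := min_eq_right hlt.le
            rw [this]; linarith
          · have h3 := h2 l hli hl
            have h4 : τ l - a l ≤ ζ l := by
              rw [hζdef]; simp only
              have : min (a l) (b l) ≤ a l := min_le_left _ _
              linarith
            linarith
    -- the witness set W
    set W : Set (I → ℤ) :=
      {e : I → ℤ | e ∈ E ∧ ∃ i, a i ≠ b i ∧ e i = ζ i ∧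
        ∀ l, a l ≠ b l → l ≠ i → ζ l < e l} with hWdef
    -- the recursive sweep
    have hrec : ∀ L : List I, L.Nodup → (∀ u ∈ L, u ≠ j ∧ a u = b u) →
        ∃ η : I → ℤ,
          (∀ i, a i ≠ b i → η i = ζ i) ∧
          (∀ i, η i ≤ ζ i) ∧
          (η j < ζ j) ∧
          (∀ u, u ≠ j → a u = b u → u ∉ L → η u = ζ u) ∧
          (∀ e ∈ W, ¬ ∀ k, a k = b k → η k < e k) ∧
          (∀ k, a k = b k → (k = j ∨ k ∈ L) →
            (η k ≤ ζ k - γ k ∨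
              ∃ q ∈ W, q k = η k ∧ ∀ k', a k' = b k' → k' ≠ k → η k' < q k')) := by
      intro L
      induction L with
      | nil =>
        intro _ _
        by_cases hT : ∃ e ∈ W, ∀ k', a k' = b k' → k' ≠ j → ζ k' < e k'
        · -- take the greatest j-coordinate
          set P : ℤ → Prop := fun y =>
            ∃ e, (e ∈ W ∧ ∀ k', a k' = b k' → k' ≠ j → ζ k' < e k') ∧ e j = y with hP
          have hPbdd : ∀ z, P z → z ≤ ζ j - 1 := by
            rintro z ⟨e, ⟨⟨heE, i, hib, hei, hWF⟩, hTfree⟩, hez⟩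
            by_contra hcon
            push_neg at hcon
            have hzj : ζ j ≤ e j := by omega
            rcases eq_or_lt_of_le hzj with heq | hlt
            · exact hEX2 e heE i hib hei heq.symm (fun l hli hlj => by
                by_cases hlb : a l = b l
                · exact hTfree l hlb hlj
                · exact hWF l hlb hli)
            · refine hEXm e heE i hei (fun l hli => ?_)
              by_cases hlb : a l = b l
              · by_cases hlj : l = j
                · rw [hlj]; exact hlt
                · exact hTfree l hlb hlj
              · exact hWF l hlb hli
          obtain ⟨e1, he1⟩ := hT
          have hPinh : ∃ z, P z := ⟨e1 j, e1, ⟨⟨he1.1, he1.2⟩, rfl⟩⟩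
          obtain ⟨y, ⟨q, ⟨hqW, hqF⟩, hqj⟩, hymax⟩ :=
            Int.exists_greatest_of_bdd ⟨ζ j - 1, hPbdd⟩ hPinh
          have hylt : y < ζ j := by
            have := hPbdd y ⟨q, ⟨⟨hqW, hqF⟩, hqj⟩⟩
            omega
          refine ⟨Function.update ζ j y, ?_, ?_, ?_, ?_, ?_, ?_⟩
          · intro i hib
            have hij : i ≠ j := fun h => hib (h ▸ hab)
            rw [Function.update_of_ne hij]
          · intro i
            by_cases h : i = j
            · subst h; rw [Function.update_self]; exact hylt.le
            · rw [Function.update_of_ne h]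
          · rw [Function.update_self]; exact hylt
          · intro u hu _ _
            rw [Function.update_of_ne hu]
          · rintro e ⟨heE, i, hib, hei, hWF⟩ hall
            have heP : P (e j) := by
              refine ⟨e, ⟨⟨⟨heE, i, hib, hei, hWF⟩, ?_⟩, rfl⟩⟩
              intro k' hk' hkj
              have := hall k' hk'
              rwa [Function.update_of_ne hkj] at this
            have h1 := hymax _ heP
            have h2 := hall j hab
            rw [Function.update_self] at h2
            omega
          · intro k hk hcase
            rcases hcase with hkj | hmem
            · subst hkj
              right
              refine ⟨q, hqW, ?_, ?_⟩
              · rw [Function.update_self]; exact hqj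
              · intro k' hk' hkk
                rw [Function.update_of_ne hkk]
                exact hqF k' hk' hkk
            · exact absurd hmem List.not_mem_nil
        · refine ⟨Function.update ζ j (ζ j - max (γ j) 1), ?_, ?_, ?_, ?_, ?_, ?_⟩
          · intro i hib
            have hij : i ≠ j := fun h => hib (h ▸ hab)
            rw [Function.update_of_ne hij]
          · intro i
            by_cases h : i = j
            · subst h; rw [Function.update_self]
              have := le_max_right (γ i) 1; omega
            · rw [Function.update_of_ne h]
          · rw [Function.update_self]
            have := le_max_right (γ j) 1; omega
          · intro u hu _ _
            rw [Function.update_of_ne hu]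
          · rintro e heW hall
            refine hT ⟨e, heW, ?_⟩
            intro k' hk' hkj
            have := hall k' hk'
            rwa [Function.update_of_ne hkj] at this
          · intro k hk hcase
            rcases hcase with hkj | hmem
            · subst hkj
              left
              rw [Function.update_self]
              have := le_max_left (γ k) 1; omega
            · exact absurd hmem List.not_mem_nil
      | cons u L ih =>
        intro hnd hprops
        have hu : u ≠ j := (hprops u (List.mem_cons_self)).1
        have habu : a u = b u := (hprops u (List.mem_cons_self)).2
        have hnd' := (List.nodup_cons.1 hnd).2
        have huL : u ∉ L := (List.nodup_cons.1 hnd).1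
        obtain ⟨η, h1, h2, h3, h4, hA, hB⟩ :=
          ih hnd' (fun v hv => hprops v (List.mem_cons_of_mem u hv))
        have hηu : η u = ζ u := h4 u hu habu huL
        by_cases hT : ∃ e ∈ W, ∀ k', a k' = b k' → k' ≠ u → η k' < e k'
        · set P : ℤ → Prop := fun y =>
            ∃ e, (e ∈ W ∧ ∀ k', a k' = b k' → k' ≠ u → η k' < e k') ∧ e u = y with hP
          have hPbdd : ∀ z, P z → z ≤ ζ u := by
            rintro z ⟨e, ⟨⟨heW, hTfree⟩, hez⟩⟩
            by_contra hcon
            push_neg at hcon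
            refine hA e heW (fun k hk => ?_)
            by_cases hku : k = u
            · subst hku; rw [hηu]; omega
            · exact hTfree k hk hku
          obtain ⟨e1, he1⟩ := hT
          have hPinh : ∃ z, P z := ⟨e1 u, e1, ⟨⟨he1.1, he1.2⟩, rfl⟩⟩
          obtain ⟨y, ⟨q, ⟨hqW, hqF⟩, hqu⟩, hymax⟩ :=
            Int.exists_greatest_of_bdd ⟨ζ u, hPbdd⟩ hPinh
          have hyle : y ≤ ζ u := hPbdd y ⟨q, ⟨⟨hqW, hqF⟩, hqu⟩⟩
          refine ⟨Function.update η u y, ?_, ?_, ?_, ?_, ?_, ?_⟩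
          · intro i hib
            have hiu : i ≠ u := fun h => hib (h ▸ habu)
            rw [Function.update_of_ne hiu]; exact h1 i hib
          · intro i
            by_cases h : i = u
            · subst h; rw [Function.update_self]; exact hyle
            · rw [Function.update_of_ne h]; exact h2 i
          · rw [Function.update_of_ne hu.symm]
            exact h3
          · intro v hv hvb hvL
            have hvu : v ≠ u := fun h => hvL (h ▸ List.mem_cons_self)
            have hvL' : v ∉ L := fun h => hvL (List.mem_cons_of_mem u h)
            rw [Function.update_of_ne hvu]; exact h4 v hv hvb hvL'
          · rintro e heW hall
            have heP : P (e u) := by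
              refine ⟨e, ⟨⟨heW, ?_⟩, rfl⟩⟩
              intro k' hk' hku
              have := hall k' hk'
              rwa [Function.update_of_ne hku] at this
            have hh1 := hymax _ heP
            have hh2 := hall u habu
            rw [Function.update_self] at hh2
            omega
          · intro k hk hcase
            by_cases hku : k = u
            · subst hku
              right
              refine ⟨q, hqW, ?_, ?_⟩
              · rw [Function.update_self]; exact hqu
              · intro k' hk' hkk
                rw [Function.update_of_ne hkk]
                exact hqF k' hk' hkk
            · have hcase' : k = j ∨ k ∈ L := by
                rcases hcase with h | h
                · exact Or.inl h
                · rcases List.mem_cons.1 h with h | h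
                  · exact absurd h hku
                  · exact Or.inr h
              rcases hB k hk hcase' with hLOW | ⟨q', hq'W, hq'k, hq'gt⟩
              · left; rw [Function.update_of_ne hku]; exact hLOW
              · right
                refine ⟨q', hq'W, ?_, ?_⟩
                · rw [Function.update_of_ne hku]; exact hq'k
                · intro k' hk' hkk
                  by_cases hk'u : k' = u
                  · subst hk'u
                    rw [Function.update_self]
                    have := hq'gt k' hk' hkk
                    omega
                  · rw [Function.update_of_ne hk'u]
                    exact hq'gt k' hk' hkk
        · refine ⟨Function.update η u (ζ u - γ u), ?_, ?_, ?_, ?_, ?_, ?_⟩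
          · intro i hib
            have hiu : i ≠ u := fun h => hib (h ▸ habu)
            rw [Function.update_of_ne hiu]; exact h1 i hib
          · intro i
            by_cases h : i = u
            · subst h; rw [Function.update_self]
              have := hγ0 i; omega
            · rw [Function.update_of_ne h]; exact h2 i
          · rw [Function.update_of_ne hu.symm]; exact h3
          · intro v hv hvb hvL
            have hvu : v ≠ u := fun h => hvL (h ▸ List.mem_cons_self)
            have hvL' : v ∉ L := fun h => hvL (List.mem_cons_of_mem u h)
            rw [Function.update_of_ne hvu]; exact h4 v hv hvb hvL'
          · rintro e heW hall
            refine hT ⟨e, heW, ?_⟩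
            intro k' hk' hku
            have := hall k' hk'
            rwa [Function.update_of_ne hku] at this
          · intro k hk hcase
            by_cases hku : k = u
            · subst hku
              left; rw [Function.update_self]
            · have hcase' : k = j ∨ k ∈ L := by
                rcases hcase with h | h
                · exact Or.inl h
                · rcases List.mem_cons.1 h with h | h
                  · exact absurd h hku
                  · exact Or.inr h
              rcases hB k hk hcase' with hLOW | ⟨q', hq'W, hq'k, hq'gt⟩
              · left; rw [Function.update_of_ne hku]; exact hLOW
              · right
                refine ⟨q', hq'W, ?_, ?_⟩
                · rw [Function.update_of_ne hku]; exact hq'k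
                · intro k' hk' hkk
                  by_cases hk'u : k' = u
                  · subst hk'u
                    rw [Function.update_self]
                    have h5 := hq'gt k' hk' hkk
                    have h6 := hγ0 k'
                    omega
                  · rw [Function.update_of_ne hk'u]
                    exact hq'gt k' hk' hkk
    -- apply the sweep with the full list of free coordinates
    set L : List I := (Finset.univ.filter fun u => u ≠ j ∧ a u = b u).toList with hLdef
    have hLmem : ∀ u, u ≠ j → a u = b u → u ∈ L := by
      intro u h1' h2'
      rw [hLdef, Finset.mem_toList, Finset.mem_filter]
      exact ⟨Finset.mem_univ u, h1', h2'⟩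
    obtain ⟨η, h1, h2, h3, h4, hA, hB⟩ := hrec L (Finset.nodup_toList _)
      (fun u hu => by
        rw [hLdef, Finset.mem_toList, Finset.mem_filter] at hu
        exact hu.2)
    refine ⟨τ - η, ?_, ?_, ?_, ?_⟩
    · -- τ - η ∈ K
      intro e he hdel
      have hττ : τ - (τ - η) = η := by funext l; simp [Pi.sub_apply]
      rw [hττ] at hdel
      rcases mem_delta_iff.1 hdel with ⟨k, hek, hgt⟩
      by_cases hk : a k = b k
      · have hkL : k = j ∨ k ∈ L := by
          by_cases hkj : k = j
          · exact Or.inl hkj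
          · exact Or.inr (hLmem k hkj hk)
        rcases hB k hk hkL with hLOW | ⟨q, hqW, hqk, hqgt⟩
        · -- push up using the conductor
          set ν : I → ℤ := fun l =>
            if l = k then ζ k - η k - γ k else |ζ l| + |α0 l| + 1 with hνdef
          have hν0 : (0 : I → ℤ) ≤ ν := by
            intro l
            by_cases h : l = k
            · simp only [hνdef, h, if_pos, Pi.zero_apply]
              subst h; omega
            · simp only [hνdef, if_neg h, Pi.zero_apply]
              have := abs_nonneg (ζ l)
              have := abs_nonneg (α0 l)
              omega
          have hfE : e + (γ + ν) ∈ E := hES e he _ (hγmem ν hν0)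
          refine hEXm _ hfE k ?_ ?_
          · have hνk : ν k = ζ k - η k - γ k := by simp [hνdef]
            simp only [Pi.add_apply, hνk, hek]; ring
          · intro l hl
            have hνl : ν l = |ζ l| + |α0 l| + 1 := by simp [hνdef, hl]
            simp only [Pi.add_apply, hνl]
            have hb1 := hElb e he l
            have hb2 := le_abs_self (ζ l)
            have hb3 := le_abs_self (α0 l)
            have hb4 := hγ0 l
            linarith
        · -- pivot with the extremal element q
          obtain ⟨hqE, i, hib, hqi, hqF⟩ := hqW
          have hqke : q k = e k := by rw [hqk, hek]
          obtain ⟨g, hgE, hgk, hgmin, hgeq⟩ := hEE2 q hqE e he k hqke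
          have hik : i ≠ k := fun h => hib (h ▸ hk)
          have hei : ζ i < e i := by
            have := hgt i hik
            rwa [h1 i hib] at this
          have hgi : g i = ζ i := by
            have hne : q i ≠ e i := by rw [hqi]; exact ne_of_lt hei
            have := hgeq i hik hne
            rw [this, hqi]
            exact min_eq_left hei.le
          have hgW : g ∈ W := by
            refine ⟨hgE, i, hib, hgi, ?_⟩
            intro l hlb hli
            have hlk : l ≠ k := fun h => hlb (h ▸ hk)
            have hq1 : ζ l < q l := hqF l hlb hli
            have he1 : ζ l < e l := by
              have := hgt l hlk
              rwa [h1 l hlb] at this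
            calc ζ l < min (q l) (e l) := lt_min hq1 he1
              _ ≤ g l := hgmin l hlk
          refine hA g hgW (fun k' hk' => ?_)
          by_cases h : k' = k
          · subst h
            rw [← hqk]; exact hgk
          · have hq1 : η k' < q k' := hqgt k' hk' h
            have he1 : η k' < e k' := hgt k' h
            calc η k' < min (q k') (e k') := lt_min hq1 he1
              _ ≤ g k' := hgmin k' h
      · -- equality coordinate is in F : e itself violates hA
        have heW : e ∈ W := by
          refine ⟨he, k, hk, by rw [hek, h1 k hk], ?_⟩
          intro l hlb hlk
          have := hgt l hlk
          rwa [h1 l hlb] at this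
        refine hA e heW (fun k' hk' => ?_)
        have : k' ≠ k := fun h => hk (h ▸ hk')
        exact hgt k' this
    · -- a j < (τ - η) j
      have : ζ j = τ j - a j := by
        rw [hζdef]; simp only; rw [hab, min_self]
      simp only [Pi.sub_apply]
      omega
    · intro i _
      have : ζ i = τ i - min (a i) (b i) := rfl
      have h := h2 i
      simp only [Pi.sub_apply]
      omega
    · intro i _ hib
      have : ζ i = τ i - min (a i) (b i) := rfl
      have h := h1 i hib
      simp only [Pi.sub_apply]
      omega
  exact ⟨⟨⟨γ + α0, hne⟩, hstab, hbound⟩, hKE1, hKE2⟩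

end KEmain

section FinalThm

variable {I : Type*}

lemma sub_K0_eq [Fintype I] (S : Set (I → ℤ)) (hzero : (0 : I → ℤ) ∈ S)
    (γ : I → ℤ) (E : Set (I → ℤ)) (hEstab : ∀ a ∈ E, ∀ s ∈ S, a + s ∈ E) :
    sub (K0 S (γ - 1)) E = {x : I → ℤ | ∀ e ∈ E, e ∉ delta (γ - 1 - x)} := by
  ext x
  constructor
  · intro hx e he hdel
    rcases mem_delta_sub.1 hdel with ⟨i, hi, hl⟩
    have hx' : x + e ∈ K0 S (γ - 1) := hx e he
    have h0 : (0 : I → ℤ) ∈ delta (γ - 1 - (x + e)) := by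
      refine mem_delta_sub.2 ⟨i, ?_, ?_⟩
      · simp only [Pi.zero_apply, Pi.add_apply]
        omega
      · intro l hl'
        have := hl l hl'
        simp only [Pi.zero_apply, Pi.add_apply]
        omega
    have : (0 : I → ℤ) ∈ delta ((γ - 1) - (x + e)) ∩ S := ⟨h0, hzero⟩
    rw [hx'] at this
    exact this
  · intro hx f hf
    show delta ((γ - 1) - (x + f)) ∩ S = ∅
    rw [Set.eq_empty_iff_forall_notMem]
    rintro s ⟨hsd, hsS⟩
    rcases mem_delta_sub.1 hsd with ⟨i, hi, hl⟩
    have hsf : s + f ∈ E := by rw [add_comm]; exact hEstab f hf s hsS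
    refine hx (s + f) hsf (mem_delta_sub.2 ⟨i, ?_, ?_⟩)
    · simp only [Pi.add_apply]
      simp only [Pi.sub_apply, Pi.add_apply, Pi.one_apply] at hi
      simp only [Pi.sub_apply, Pi.one_apply]
      omega
    · intro l hl'
      have h5 := hl l hl'
      simp only [Pi.sub_apply, Pi.add_apply, Pi.one_apply] at h5 ⊢
      omega

end FinalThm


/-- Proposition 50: `K⁰_S − E ∈ 𝔊_S` for every `E ∈ 𝔊_S`; in particular `K⁰_S ∈ 𝔊_S`. -/
theorem K0_sub_goodIdeal {I : Type*} [Fintype I] [Nonempty I]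
    (S : Set (I → ℤ)) (hS : IsGood S) (γ : I → ℤ) (hγ : IsLeast (cond S) γ) :
    (∀ E : Set (I → ℤ), IsGoodIdeal S E → IsGoodIdeal S (sub (K0 S (γ - 1)) E)) ∧
    IsGoodIdeal S (K0 S (γ - 1)) := by
  constructor
  · intro E hE
    rw [sub_K0_eq S hS.1 γ E hE.1.2.1]
    exact KEgood S hS γ hγ E hE
  · have hSid : IsGoodIdeal S S :=
      ⟨⟨⟨0, hS.1⟩, hS.2.1, ⟨0, hS.1, fun s hs => by simpa using hs⟩⟩,
        hS.2.2.2.2.1, hS.2.2.2.2.2⟩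
    have hset : K0 S (γ - 1) = {x : I → ℤ | ∀ e ∈ S, e ∉ delta (γ - 1 - x)} := by
      ext x
      show delta ((γ - 1) - x) ∩ S = ∅ ↔ _
      rw [Set.eq_empty_iff_forall_notMem]
      constructor
      · intro h e he hdel
        exact h e ⟨hdel, he⟩
      · rintro h e ⟨hdel, heS⟩
        exact h e heS hdel
    rw [hset]
    exact KEgood S hS γ hγ S hSid
end

section
/- Let E and F be semigroup ideals of a good semigroup S. Then: (a) E ⊆ F − (F − E); (b) if E and F satisfy property (E1), F ⊊ E, and γ^E = γ^F, then E ⊊ F − (F − E). -/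
open GoodSemigroup
/-- Lemma 60: (a) `E ⊆ F − (F − E)`; (b) if `E` and `F` satisfy (E1), `F ⊊ E` and
`γ^E = γ^F`, then `E ⊊ F − (F − E)`. -/
theorem ideal_sub_biduality_inclusion {I : Type*} [Fintype I] [Nonempty I]
    (S E F : Set (I → ℤ)) (hS : IsGood S) (hE : IsIdeal S E) (hF : IsIdeal S F) :
    E ⊆ sub F (sub F E) ∧
    (∀ γ : I → ℤ, SatE1 E → SatE1 F → F ⊂ E →
      IsLeast (cond E) γ → IsLeast (cond F) γ → E ⊂ sub F (sub F E)) := by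
  classical
  have ha : E ⊆ sub F (sub F E) := by
    intro e he f hf
    have := hf e he
    simpa [add_comm] using this
  refine ⟨ha, ?_⟩
  intro γ hE1 hF1 hFE hgE hgF
  set G := sub F E with hGdef
  -- every element of G is nonnegative
  have hG0 : ∀ f ∈ G, (0 : I → ℤ) ≤ f := by
    intro f hf
    have hmem : f + γ ∈ cond F := by
      intro δ hδ
      have h1 : γ + δ ∈ E := hgE.1 δ hδ
      have h2 := hf _ h1
      simpa [add_assoc] using h2
    have hle := hgF.2 hmem
    intro i
    have := hle i
    simp only [Pi.add_apply, Pi.zero_apply] at this ⊢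
    linarith
  have h0G : (0 : I → ℤ) ∉ G := by
    intro h0
    have hEF : E ⊆ F := by
      intro e he
      simpa using h0 e he
    exact hFE.not_subset hEF
  -- there is j with f j ≥ 1 for all f ∈ G
  have hj : ∃ j : I, ∀ f ∈ G, 1 ≤ f j := by
    by_contra hcon
    push_neg at hcon
    choose g hgG hgj using hcon
    have hne : (Finset.univ : Finset I).Nonempty := Finset.univ_nonempty
    have hGmin : ∀ x ∈ G, ∀ y ∈ G, x ⊓ y ∈ G := by
      intro x hx y hy e he
      have hxe := hx e he
      have hye := hy e he
      have := hF1 _ hxe _ hye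
      have heq : (x + e) ⊓ (y + e) = x ⊓ y + e := by
        funext i
        simp [min_add_add_right]
      rwa [heq] at this
    have hm : Finset.univ.inf' hne g ∈ G :=
      Finset.inf'_mem G hGmin _ hne g (fun i _ => hgG i)
    have hmz : Finset.univ.inf' hne g = 0 := by
      funext i
      have h1 : Finset.univ.inf' hne g i ≤ g i i :=
        (Finset.inf'_le g (Finset.mem_univ i)) i
      have h2 := hG0 _ hm i
      have h4 : g i i ≤ 0 := by linarith [hgj i]
      simp only [Pi.zero_apply] at h2 ⊢
      omega
    rw [hmz] at hm
    exact h0G hm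
  obtain ⟨j, hj1⟩ := hj
  -- γ - e_j is not in cond E, giving β ∉ E with β ≥ γ - e_j
  have hnot : γ - Pi.single j 1 ∉ cond E := by
    intro hmem
    have h := hgE.2 hmem j
    simp only [Pi.sub_apply, Pi.single_eq_same] at h
    omega
  have hex : ∃ δ : I → ℤ, 0 ≤ δ ∧ γ - Pi.single j 1 + δ ∉ E := by
    by_contra hcon
    push_neg at hcon
    exact hnot (fun δ hδ => hcon δ hδ)
  obtain ⟨δ, hδ0, hβE⟩ := hex
  set β := γ - Pi.single j 1 + δ with hβdef
  have hβsub : β ∈ sub F G := by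
    intro f hf
    have hfn := hG0 f hf
    have hfj := hj1 f hf
    have hle : (0 : I → ℤ) ≤ β + f - γ := by
      intro i
      have h1 := hδ0 i
      have h2 := hfn i
      simp only [Pi.zero_apply] at h1 h2 ⊢
      simp only [hβdef, Pi.sub_apply, Pi.add_apply, Pi.single_apply]
      split_ifs with h
      · subst h
        linarith
      · linarith
    have hmem := hgF.1 _ hle
    have heq : γ + (β + f - γ) = β + f := by ring
    rwa [heq] at hmem
  exact (Set.ssubset_iff_of_subset ha).mpr ⟨β, hβsub, hβE⟩
end

section
/- Let S be a good semigroup and let K ∈ 𝔊_S be such that K − (K − E) = E for all E ∈ 𝔊_S. Then K is a canonical ideal of S. -/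
open GoodSemigroup

private lemma exists_pi_min {I : Type*} [Fintype I] [Nonempty I]
    (F : Set (I → ℤ)) (hne : F.Nonempty) (hE1 : SatE1 F)
    (b : I → ℤ) (hb : ∀ f ∈ F, b ≤ f) :
    ∃ m ∈ F, ∀ f ∈ F, m ≤ f := by
  classical
  have hcoord : ∀ i : I, ∃ g ∈ F, ∀ f ∈ F, g i ≤ f i := by
    intro i
    obtain ⟨lb, ⟨⟨g, hg, hgi⟩, hleast⟩⟩ :=
      Int.exists_least_of_bdd (P := fun n => ∃ f ∈ F, f i = n)
        ⟨b i, fun z hz => by obtain ⟨f, hf, hfz⟩ := hz; exact hfz ▸ hb f hf i⟩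
        ⟨hne.choose i, hne.choose, hne.choose_spec, rfl⟩
    exact ⟨g, hg, fun f hf => hgi ▸ hleast (f i) ⟨f, hf, rfl⟩⟩
  choose g hgF hgmin using hcoord
  have key : ∀ s : Finset I, s.Nonempty →
      ∃ m ∈ F, ∀ i ∈ s, ∀ f ∈ F, m i ≤ f i := by
    intro s hs
    induction hs using Finset.Nonempty.cons_induction with
    | singleton i =>
        refine ⟨g i, hgF i, ?_⟩
        intro j hj f hf
        rw [Finset.mem_singleton] at hj
        subst hj
        exact hgmin _ f hf
    | cons i s his hs ih =>
        obtain ⟨m, hmF, hm⟩ := ih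
        refine ⟨g i ⊓ m, hE1 _ (hgF i) _ hmF, ?_⟩
        intro j hj f hf
        rcases Finset.mem_cons.mp hj with h | h
        · subst h
          exact le_trans ((inf_le_left : g j ⊓ m ≤ g j) j) (hgmin j f hf)
        · exact le_trans ((inf_le_right : g i ⊓ m ≤ m) j) (hm j h f hf)
  obtain ⟨m, hmF, hm⟩ := key Finset.univ Finset.univ_nonempty
  exact ⟨m, hmF, fun f hf i => hm i (Finset.mem_univ i) f hf⟩

/-- Proposition 61: if `K − (K − E) = E` for all `E ∈ 𝔊_S`, then `K` is a canonical
ideal of `S`. -/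
theorem canonical_of_biduality {I : Type*} [Fintype I] [Nonempty I]
    (S K : Set (I → ℤ)) (hS : IsGood S) (hK : IsGoodIdeal S K)
    (hdual : ∀ E : Set (I → ℤ), IsGoodIdeal S E → sub K (sub K E) = E) :
    IsCanonicalIdeal S K := by
  classical
  obtain ⟨hS0, hSadd, hSpos, hSE0, hSE1, hSE2⟩ := hS
  have hSS : IsGoodIdeal S S :=
    ⟨⟨⟨0, hS0⟩, hSadd, ⟨0, hS0, fun a ha => by simpa using ha⟩⟩, hSE1, hSE2⟩
  have hKS : sub K S = K := by
    apply subset_antisymm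
    · intro f hf
      simpa using hf 0 hS0
    · intro k hk s hs
      exact hK.1.2.1 k hk s hs
  have hKK : sub K K = S := by
    have h := hdual S hSS
    rwa [hKS] at h
  refine ⟨hK, ?_⟩
  intro E γ hE hKE hγK hγE
  set D := sub K E with hD
  have hDS : D ⊆ S := by
    intro f hf
    rw [← hKK]
    intro k hk
    exact hf k (hKE hk)
  have hγcondK : ∀ β : I → ℤ, 0 ≤ β → γ + β ∈ K := fun β hβ => hγK.1 β hβ
  obtain ⟨α, hαS, hαE⟩ := hE.1.2.2
  have hDne : D.Nonempty := by
    refine ⟨γ + α, fun e he => ?_⟩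
    have h1 : (0 : I → ℤ) ≤ α + e := hSpos _ (hαE e he)
    have heq : γ + α + e = γ + (α + e) := by ring
    rw [heq]
    exact hγcondK _ h1
  have hDE1 : SatE1 D := by
    intro f1 h1 f2 h2 e he
    have heq : f1 ⊓ f2 + e = (f1 + e) ⊓ (f2 + e) := by
      funext i
      simp only [Pi.inf_apply, Pi.add_apply]
      omega
    rw [heq]
    exact hK.2.1 _ (h1 e he) _ (h2 e he)
  obtain ⟨m, hmD, hmmin⟩ := exists_pi_min D hDne hDE1 0 (fun f hf => hSpos f (hDS hf))
  have hEeq : sub K D = E := hdual E hE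
  have hγm : γ - m ∈ cond E := by
    intro β hβ
    rw [← hEeq]
    intro f hf
    have h0 : (0 : I → ℤ) ≤ β + (f - m) := by
      intro i
      have h1 := hmmin f hf i
      have h2 : (0:ℤ) ≤ β i := hβ i
      simp only [Pi.add_apply, Pi.sub_apply, Pi.zero_apply]
      linarith
    have heq : γ - m + β + f = γ + (β + (f - m)) := by ring
    rw [heq]
    exact hγcondK _ h0
  have hm0 : m = 0 := by
    have h1 : γ ≤ γ - m := hγE.2 hγm
    have h2 : (0 : I → ℤ) ≤ m := hSpos m (hDS hmD)
    funext i
    have h3 := h1 i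
    have h4 := h2 i
    simp only [Pi.sub_apply, Pi.zero_apply] at *
    linarith
  apply subset_antisymm hKE
  intro e he
  have h := hmD e he
  rwa [hm0, zero_add] at h
end

section
/- Let S be a good semigroup, E a semigroup ideal of S, and α ∈ K^0_S − (K^0_S − E). If ζ ∈ ℤ^I satisfies Δ^E(τ − ζ) = ∅, then Δ^S(τ − ζ − α) = ∅. Equivalently, if β ∈ ℤ^I satisfies Δ^S(τ − β) ≠ ∅, then Δ^E(τ − β + α) ≠ ∅. -/
open GoodSemigroup
/-- Lemma 65. -/
theorem delta_empty_of_mem_bidual {I : Type*} [Fintype I] [Nonempty I]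
    (S E : Set (I → ℤ)) (hS : IsGood S) (hE : IsIdeal S E)
    (γ : I → ℤ) (hγ : IsLeast (cond S) γ)
    (α : I → ℤ) (hα : α ∈ sub (K0 S (γ - 1)) (sub (K0 S (γ - 1)) E)) :
    (∀ ζ : I → ℤ, delta (γ - 1 - ζ) ∩ E = ∅ → delta (γ - 1 - ζ - α) ∩ S = ∅) ∧
    (∀ β : I → ℤ, (delta (γ - 1 - β) ∩ S).Nonempty →
      (delta (γ - 1 - β + α) ∩ E).Nonempty) := by
  have main : ∀ ζ : I → ℤ, delta (γ - 1 - ζ) ∩ E = ∅ → delta (γ - 1 - ζ - α) ∩ S = ∅ := by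
    intro ζ hζ
    have hζK : ζ ∈ sub (K0 S (γ - 1)) E := by
      intro e he
      show delta (γ - 1 - (ζ + e)) ∩ S = ∅
      rw [Set.eq_empty_iff_forall_notMem]
      rintro s ⟨hsd, hsS⟩
      obtain ⟨i, h1, h2⟩ := Set.mem_iUnion.mp hsd
      have hmem : s + e ∈ delta (γ - 1 - ζ) ∩ E := by
        refine ⟨Set.mem_iUnion.mpr ⟨i, ?_, ?_⟩, ?_⟩
        · intro j hj
          have := h1 j hj
          simp only [Pi.sub_apply, Pi.add_apply, Pi.one_apply] at this ⊢
          linarith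
        · intro k hk
          have := h2 k hk
          simp only [Pi.sub_apply, Pi.add_apply, Pi.one_apply] at this ⊢
          linarith
        · rw [add_comm]
          exact hE.2.1 e he s hsS
      rw [hζ] at hmem
      exact hmem
    have h := hα ζ hζK
    have : delta (γ - 1 - (α + ζ)) ∩ S = ∅ := h
    have heq : γ - 1 - ζ - α = γ - 1 - (α + ζ) := by ring
    rw [heq]
    exact this
  refine ⟨main, fun β hβ => ?_⟩
  by_contra h
  rw [Set.not_nonempty_iff_eq_empty] at h
  have := main (β - α) (by rw [show γ - 1 - (β - α) = γ - 1 - β + α by ring]; exact h)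
  rw [show γ - 1 - (β - α) - α = γ - 1 - β by ring] at this
  rw [this] at hβ
  exact Set.not_nonempty_empty hβ
end

section
/- Let S be a good semigroup. Then K^0_S − (K^0_S − E) = E for every E ∈ 𝔊_S. -/
namespace K0Aux
open GoodSemigroup
variable {I : Type*}

lemma mem_delta {α β : I → ℤ} :
    β ∈ delta α ↔ ∃ i, β i = α i ∧ ∀ k, k ≠ i → α k < β k := by
  unfold delta deltaJ
  simp only [Set.mem_iUnion, Set.mem_setOf_eq, Set.mem_singleton_iff]
  constructor
  · rintro ⟨i, h1, h2⟩
    exact ⟨i, h1 i rfl, fun k hk => h2 k hk⟩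
  · rintro ⟨i, h1, h2⟩
    exact ⟨i, fun k hk => by subst hk; exact h1, fun k hk => h2 k hk⟩

lemma delta_symm {τ α β : I → ℤ} (h : β ∈ delta (τ - α)) : α ∈ delta (τ - β) := by
  rw [mem_delta] at h ⊢
  obtain ⟨i, h1, h2⟩ := h
  simp only [Pi.sub_apply] at h1 h2 ⊢
  exact ⟨i, by linarith, fun k hk => by have := h2 k hk; linarith⟩

/-- `E* = {β | Δ^E(τ − β) = ∅}`. -/
def Estar (τ : I → ℤ) (E : Set (I → ℤ)) : Set (I → ℤ) := {β | delta (τ - β) ∩ E = ∅}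

lemma mem_Estar {τ : I → ℤ} {E : Set (I → ℤ)} {β : I → ℤ} :
    β ∈ Estar τ E ↔ ∀ x, x ∈ delta (τ - β) → x ∉ E := by
  unfold Estar
  rw [Set.mem_setOf_eq, Set.eq_empty_iff_forall_notMem]
  simp only [Set.mem_inter_iff, not_and]

lemma mem_K0 {S : Set (I → ℤ)} {τ α : I → ℤ} :
    α ∈ K0 S τ ↔ ∀ x, x ∈ delta (τ - α) → x ∉ S := by
  unfold K0
  rw [Set.mem_setOf_eq, Set.eq_empty_iff_forall_notMem]
  simp only [Set.mem_inter_iff, not_and]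

lemma sub_K0_eq (S F : Set (I → ℤ)) (τ : I → ℤ) (h0 : (0 : I → ℤ) ∈ S)
    (hF : ∀ a ∈ F, ∀ s ∈ S, a + s ∈ F) :
    sub (K0 S τ) F = Estar τ F := by
  ext α
  constructor
  · intro hα
    rw [mem_Estar]
    intro β hβ hβF
    have hk : α + β ∈ K0 S τ := hα β hβF
    rw [mem_K0] at hk
    obtain ⟨i, h1, h2⟩ := mem_delta.1 hβ
    refine hk 0 ?_ h0
    rw [mem_delta]
    simp only [Pi.sub_apply, Pi.add_apply, Pi.zero_apply] at h1 h2 ⊢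
    exact ⟨i, by linarith, fun k hk' => by have := h2 k hk'; linarith⟩
  · intro hα f hf
    rw [mem_Estar] at hα
    rw [mem_K0]
    intro s hs hsS
    refine hα (f + s) ?_ (hF f hf s hsS)
    obtain ⟨i, h1, h2⟩ := mem_delta.1 hs
    rw [mem_delta]
    simp only [Pi.sub_apply, Pi.add_apply] at h1 h2 ⊢
    exact ⟨i, by linarith, fun k hk' => by have := h2 k hk'; linarith⟩

lemma Estar_add {S E : Set (I → ℤ)} (τ : I → ℤ)
    (hE : ∀ a ∈ E, ∀ s ∈ S, a + s ∈ E) :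
    ∀ b ∈ Estar τ E, ∀ s ∈ S, b + s ∈ Estar τ E := by
  intro b hb s hs
  rw [mem_Estar] at hb ⊢
  intro x hx hxE
  refine hb (x + s) ?_ (hE x hxE s hs)
  obtain ⟨i, h1, h2⟩ := mem_delta.1 hx
  rw [mem_delta]
  simp only [Pi.sub_apply, Pi.add_apply] at h1 h2 ⊢
  exact ⟨i, by linarith, fun k hk' => by have := h2 k hk'; linarith⟩

lemma min_lemma [Nonempty I] {E : Set (I → ℤ)} (hE1 : SatE1 E) (α : I → ℤ)
    (g : I → (I → ℤ)) (hgE : ∀ i, g i ∈ E) (hgi : ∀ i, g i i = α i)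
    (hgα : ∀ i k, α k ≤ g i k) :
    ∀ s : Finset I, ∃ m ∈ E, (∀ i ∈ s, m i ≤ α i) ∧ ∀ k, α k ≤ m k := by
  intro s
  classical
  induction s using Finset.induction_on with
  | empty =>
    obtain ⟨i0⟩ := ‹Nonempty I›
    exact ⟨g i0, hgE i0, by simp, hgα i0⟩
  | @insert a s ha ih =>
    obtain ⟨m, hmE, hm1, hm2⟩ := ih
    refine ⟨g a ⊓ m, hE1 _ (hgE a) _ hmE, ?_, ?_⟩
    · intro i hi
      rcases Finset.mem_insert.1 hi with rfl | hi
      · calc (g i ⊓ m) i ≤ g i i := inf_le_left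
          _ = α i := hgi i
      · calc (g a ⊓ m) i ≤ m i := inf_le_right
          _ ≤ α i := hm1 i hi
    · intro k
      exact le_inf (hgα a k) (hm2 k)

lemma exists_delta [Fintype I] [Nonempty I] {E : Set (I → ℤ)}
    (hE1 : SatE1 E) (hE2 : SatE2 E) {L : I → ℤ} (hL : ∀ e ∈ E, ∀ i, L i < e i)
    (α : I → ℤ) (hα : α ∉ E) :
    ∃ j : I, ∃ δ : I → ℤ, δ j = α j ∧ (∀ i, i ≠ j → δ i < α i) ∧ delta δ ∩ E = ∅ := by
  classical
  -- Step 1: find j such that no e ∈ E has e j = α j and α ≤ e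
  have step1 : ∃ j : I, ∀ e ∈ E, e j = α j → ∃ i, e i < α i := by
    by_contra h
    push_neg at h
    choose g hgE hgj hgα using h
    obtain ⟨m, hmE, hm1, hm2⟩ := min_lemma hE1 α g hgE hgj (fun i k => hgα i k) Finset.univ
    have : m = α := funext fun i => le_antisymm (hm1 i (Finset.mem_univ i)) (hm2 i)
    exact hα (this ▸ hmE)
  obtain ⟨j, hQ⟩ := step1
  set L' : I → ℤ := fun i => min (L i) (α i - 1) with hL'def
  have hL'E : ∀ e ∈ E, ∀ i, L' i < e i :=
    fun e he i => lt_of_le_of_lt (min_le_left _ _) (hL e he i)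
  set Good : (I → ℤ) → Prop := fun δ =>
    δ j = α j ∧ (∀ i, i ≠ j → L' i ≤ δ i ∧ δ i ≤ α i - 1) ∧
    ∀ e ∈ E, e j = α j → ∃ i, i ≠ j ∧ e i ≤ δ i with hGood
  have htop : Good (fun i => if i = j then α j else α i - 1) := by
    refine ⟨by simp, fun i hi => ?_, fun e he hej => ?_⟩
    · simp only [if_neg hi]
      exact ⟨min_le_right _ _, le_refl _⟩
    · obtain ⟨i, hi⟩ := hQ e he hej
      have hij : i ≠ j := fun h => by rw [h, hej] at hi; exact lt_irrefl _ hi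
      exact ⟨i, hij, by simp only [if_neg hij]; omega⟩
  have hbdd : ∀ δ : I → ℤ, Good δ → (∑ i, (if i = j then α j else L' i)) ≤ ∑ i, δ i := by
    intro δ hδ
    apply Finset.sum_le_sum
    intro i _
    by_cases hi : i = j
    · subst hi; simp [hδ.1]
    · simp only [if_neg hi]; exact (hδ.2.1 i hi).1
  obtain ⟨n, ⟨δ, hδg, hsum⟩, hmin⟩ := Int.exists_least_of_bdd
    (P := fun n => ∃ δ, Good δ ∧ ∑ i, δ i = n)
    ⟨∑ i, (if i = j then α j else L' i), fun z hz => by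
      obtain ⟨δ, hδ, rfl⟩ := hz; exact hbdd δ hδ⟩
    ⟨∑ i, (fun i => if i = j then α j else α i - 1) i, _, htop, rfl⟩
  obtain ⟨hδj, hδbd, hδblock⟩ := hδg
  refine ⟨j, δ, hδj, fun i hi => by have := (hδbd i hi).2; omega, ?_⟩
  rw [Set.eq_empty_iff_forall_notMem]
  rintro f ⟨hfd, hfE⟩
  obtain ⟨j', h1, h2⟩ := mem_delta.1 hfd
  by_cases hjj : j' = j
  · subst hjj
    obtain ⟨i, hij, hle⟩ := hδblock f hfE (h1.trans hδj)
    exact absurd (h2 i hij) (not_lt.2 hle)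
  · -- j' ≠ j : use minimality and (E2)
    have hfj' : δ j' = f j' := h1.symm
    have hLj' : L' j' < δ j' := hfj' ▸ hL'E f hfE j'
    set δ2 : I → ℤ := Function.update δ j' (δ j' - 1) with hδ2
    have hsum2 : ∑ i, δ2 i = (∑ i, δ i) - 1 := by
      rw [hδ2, Finset.sum_update_of_mem (Finset.mem_univ j')]
      rw [← Finset.add_sum_erase Finset.univ δ (Finset.mem_univ j'), Finset.erase_eq]
      ring
    have hnot : ¬ Good δ2 := by
      intro hg
      have := hmin (∑ i, δ2 i) ⟨δ2, hg, rfl⟩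
      omega
    have hδ2j : δ2 j = α j := by
      rw [hδ2, Function.update_of_ne (fun h => hjj h.symm) _ _]
      exact hδj
    have hδ2bd : ∀ i, i ≠ j → L' i ≤ δ2 i ∧ δ2 i ≤ α i - 1 := by
      intro i hi
      by_cases hij' : i = j'
      · subst hij'
        rw [hδ2, Function.update_self]
        have := (hδbd i hi).2
        omega
      · rw [hδ2, Function.update_of_ne hij']
        exact hδbd i hi
    have hblockfail : ∃ t ∈ E, t j = α j ∧ ∀ i, i ≠ j → δ2 i < t i := by
      by_contra hc
      push_neg at hc
      refine hnot ⟨hδ2j, hδ2bd, ?_⟩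
      intro e he hej
      obtain ⟨i, hi, hle⟩ := hc e he hej
      exact ⟨i, hi, hle⟩
    obtain ⟨t, htE, htj, ht2⟩ := hblockfail
    -- t j' = δ j'
    have htj' : t j' = δ j' := by
      obtain ⟨i, hij, hle⟩ := hδblock t htE htj
      have hi' : i = j' := by
        by_contra hne
        have := ht2 i hij
        rw [hδ2, Function.update_of_ne hne] at this
        omega
      subst hi'
      have := ht2 i hij
      rw [hδ2, Function.update_self] at this
      omega
    have htfj' : t j' = f j' := by omega
    obtain ⟨ε, hεE, hε1, hε2, hε3⟩ := hE2 t htE f hfE j' htfj'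
    have hfj : δ j < f j := h2 j (fun h => hjj h.symm)
    have hεj : ε j = α j := by
      have h := hε3 j (fun h => hjj h.symm) (by omega)
      rw [h]
      have : f j > α j := by omega
      omega
    obtain ⟨i, hij, hle⟩ := hδblock ε hεE hεj
    by_cases hij' : i = j'
    · subst hij'
      omega
    · have h2i : δ i < f i := h2 i hij'
      have hti : δ i < t i := by
        have := ht2 i hij
        rw [hδ2, Function.update_of_ne hij'] at this
        exact this
      have := hε2 i hij'
      have : min (t i) (f i) ≤ ε i := this
      omega

lemma estar_estar [Fintype I] [Nonempty I] {E : Set (I → ℤ)} (τ : I → ℤ)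
    (hE1 : SatE1 E) (hE2 : SatE2 E) {L : I → ℤ} (hL : ∀ e ∈ E, ∀ i, L i < e i) :
    Estar τ (Estar τ E) = E := by
  ext α
  constructor
  · intro hα
    by_contra hαE
    obtain ⟨j, δ, hδj, hδlt, hδ⟩ := exists_delta hE1 hE2 hL α hαE
    have hβ : (τ - δ) ∈ Estar τ E := by
      rw [mem_Estar]
      intro x hx hxE
      have hτδ : τ - (τ - δ) = δ := by funext i; simp
      rw [hτδ] at hx
      rw [Set.eq_empty_iff_forall_notMem] at hδ
      exact hδ x ⟨hx, hxE⟩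
    have hβd : (τ - δ) ∈ delta (τ - α) := by
      rw [mem_delta]
      refine ⟨j, ?_, fun k hk => ?_⟩
      · simp only [Pi.sub_apply]; omega
      · have := hδlt k hk
        simp only [Pi.sub_apply]; omega
    rw [mem_Estar] at hα
    exact hα _ hβd hβ
  · intro hαE
    rw [mem_Estar]
    intro β hβd hβ
    rw [mem_Estar] at hβ
    exact hβ α (delta_symm hβd) hαE

end K0Aux

open GoodSemigroup
/-- Proposition 62: `K⁰_S − (K⁰_S − E) = E` for every `E ∈ 𝔊_S`. -/
theorem K0_biduality {I : Type*} [Fintype I] [Nonempty I]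
    (S : Set (I → ℤ)) (hS : IsGood S) (γ : I → ℤ) (hγ : IsLeast (cond S) γ)
    (E : Set (I → ℤ)) (hE : IsGoodIdeal S E) :
    sub (K0 S (γ - 1)) (sub (K0 S (γ - 1)) E) = E := by
  obtain ⟨h0S, haddS, hposS, hcondS, hE1S, hE2S⟩ := hS
  obtain ⟨⟨hne, hEadd, ⟨c, hcS, hc⟩⟩, hE1E, hE2E⟩ := hE
  have hL : ∀ e ∈ E, ∀ i, (-c - 1) i < e i := by
    intro e he i
    have h1 : (0 : I → ℤ) ≤ c + e := hposS _ (hc e he)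
    have h2 := h1 i
    simp only [Pi.add_apply, Pi.zero_apply] at h2
    simp only [Pi.sub_apply, Pi.neg_apply, Pi.one_apply]
    omega
  have hstar : ∀ b ∈ K0Aux.Estar (γ - 1) E, ∀ s ∈ S, b + s ∈ K0Aux.Estar (γ - 1) E :=
    K0Aux.Estar_add (γ - 1) hEadd
  rw [K0Aux.sub_K0_eq S E (γ - 1) h0S hEadd,
      K0Aux.sub_K0_eq S (K0Aux.Estar (γ - 1) E) (γ - 1) h0S hstar,
      K0Aux.estar_estar (γ - 1) hE1E hE2E hL]
end
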